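/- arXiv:2402.02269 — 9 statements merged into one kernel-verified Lean document; each statement's English description precedes it below -/
import Mathlib

section
/- Let G be a finite group and let H be a TI-subgroup of G, i.e., for every g ∈ G the intersection H ∩ g⁻¹Hg equals H or the trivial subgroup. Let Ω be the set of right cosets of H in G with G acting by right multiplication. Then the action of G on Ω is NOT binary if and only if there exist conjugates H₁, H₂, H₃ of H which are pairwise distinct and such that H₁ ∩ (H₂·H₃) ≠ {1}, where H₂·H₃ = {xy : x ∈ H₂, y ∈ H₃}. -/
open scoped Pointwise MatrixGroups

/-- Right multiplication action of `g : G` on the set of right cosets of `H` in `G`. -/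
def rightCosetMul {G : Type*} [Group G] (H : Subgroup G) (g : G) :
    Quotient (QuotientGroup.rightRel H) → Quotient (QuotientGroup.rightRel H) :=
  Quotient.map (fun x => x * g) (fun x y h => by
    have h' := QuotientGroup.rightRel_apply.mp h
    exact QuotientGroup.rightRel_apply.mpr (by simpa [mul_assoc] using h'))

/-- The action of `G` on the right cosets of `H` is binary. -/
def IsBinaryCosetAction {G : Type*} [Group G] (H : Subgroup G) : Prop :=
  ∀ (n : ℕ) (I J : Fin n → Quotient (QuotientGroup.rightRel H)),
    (∀ i j : Fin n, ∃ g : G,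
        rightCosetMul H g (I i) = J i ∧ rightCosetMul H g (I j) = J j) →
    ∃ g : G, ∀ k, rightCosetMul H g (I k) = J k

/-- The adjacency relation of the graph `Γ(C)`. -/
def gammaAdj {G : Type*} [Group G] (C : Set G) (x y : G) : Prop :=
  x ∈ C ∧ y ∈ C ∧ x ≠ y ∧ Commute x y ∧ (x * y⁻¹ ∈ C ∨ y * x⁻¹ ∈ C)

/-!
The stabilizer of the coset `H a⁻¹` is `a H a⁻¹`, and the elements moving `H a⁻¹` to `H a⁻¹ t`
form the right coset `(a H a⁻¹) t`; so the action is binary iff right cosets of conjugates of `H`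
that meet pairwise always have a common point. Distinct conjugates of a TI-subgroup meet trivially.
If also `A ∩ BC = 1` for distinct conjugates, fix one coset `A s`: the points where it meets the
cosets of conjugates other than `A` all coincide, since any two of them differ by an element of
some `A ∩ BC`, and that point is common to all the cosets. Conversely a nontrivial `uv ∈ A ∩ BC`
gives three cosets that meet pairwise but have no common point.
-/

namespace Subgroup

variable {G : Type*} [Group G]

def IsTI (H : Subgroup G) : Prop :=
  ∀ g : G, H ⊓ MulAut.conj g • H = H ∨ H ⊓ MulAut.conj g • H = ⊥

lemma mem_conj_smul_iff {H : Subgroup G} {a x : G} :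
    x ∈ MulAut.conj a • H ↔ a⁻¹ * x * a ∈ H := by
  rw [mem_pointwise_smul_iff_inv_smul_mem, ← map_inv, MulAut.smul_def, MulAut.conj_apply, inv_inv]

lemma eq_of_le_conj_smul [Finite G] {H : Subgroup G} {g : G} (h : H ≤ MulAut.conj g • H) :
    H = MulAut.conj g • H :=
  eq_of_le_of_card_ge h (card_map_of_injective (MulAut.conj g).injective).le

lemma IsTI.conj_smul_inf_eq_bot [Finite G] {H : Subgroup G} (hH : H.IsTI) {a b : G}
    (hab : MulAut.conj a • H ≠ MulAut.conj b • H) :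
    MulAut.conj a • H ⊓ MulAut.conj b • H = ⊥ := by
  have hb : MulAut.conj b • H = MulAut.conj a • MulAut.conj (a⁻¹ * b) • H := by
    rw [smul_smul, ← map_mul, mul_inv_cancel_left]
  rw [hb, ← smul_inf]
  rcases hH (a⁻¹ * b) with h | h
  · exact absurd (by rw [hb, ← eq_of_le_conj_smul (inf_eq_left.mp h)]) hab
  · rw [h, smul_bot]

lemma IsTI.eq_one_of_mem_conj_smul [Finite G] {H : Subgroup G} (hH : H.IsTI) {a b x : G}
    (hab : MulAut.conj a • H ≠ MulAut.conj b • H) (ha : x ∈ MulAut.conj a • H)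
    (hb : x ∈ MulAut.conj b • H) : x = 1 :=
  (mem_bot.mp <| hH.conj_smul_inf_eq_bot hab ▸ mem_inf.mpr ⟨ha, hb⟩)

lemma mul_inv_mem_of_mul_inv_mem {K : Subgroup G} {x y t : G} (hx : x * t⁻¹ ∈ K)
    (hy : y * t⁻¹ ∈ K) : x * y⁻¹ ∈ K := by
  simpa [mul_assoc] using mul_mem hx (inv_mem hy)

theorem exists_forall_mul_inv_mem_of_pairwise {ι : Type*} {K : ι → Subgroup G} {t : ι → G}
    (hK : ∀ i j k, K i ≠ K j → K i ≠ K k → (K i : Set G) ∩ (K j * K k) ⊆ {1})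
    (hpair : ∀ i j, ∃ g, g * (t i)⁻¹ ∈ K i ∧ g * (t j)⁻¹ ∈ K j) :
    ∃ g, ∀ k, g * (t k)⁻¹ ∈ K k := by
  rcases isEmpty_or_nonempty ι with _ | ⟨⟨i₀⟩⟩
  · exact ⟨1, fun k => isEmptyElim k⟩
  choose h hh hh₀ using fun i => hpair i i₀
  obtain ⟨i₁, hi₁⟩ : ∃ i₁, (∃ k, K k ≠ K i₀) → K i₁ ≠ K i₀ := by
    by_cases hex : ∃ k, K k ≠ K i₀
    · obtain ⟨i₁, hi₁⟩ := hex
      exact ⟨i₁, fun _ => hi₁⟩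
    · exact ⟨i₀, fun h => absurd h hex⟩
  refine ⟨h i₁, fun k => ?_⟩
  by_cases hk : K k = K i₀
  · have hhk := hh k
    rw [hk] at hhk ⊢
    simpa [mul_assoc] using mul_mem (mul_inv_mem_of_mul_inv_mem (hh₀ i₁) (hh₀ k)) hhk
  · obtain ⟨g, hgk, hg₁⟩ := hpair k i₁
    have hmem : h k * (h i₁)⁻¹ ∈ (K i₀ : Set G) ∩ (K k * K i₁) := by
      refine ⟨mul_inv_mem_of_mul_inv_mem (hh₀ k) (hh₀ i₁), ?_⟩
      simpa [mul_assoc] using Set.mul_mem_mul (mul_inv_mem_of_mul_inv_mem (hh k) hgk)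
        (inv_mem (mul_inv_mem_of_mul_inv_mem (hh i₁) hg₁))
    have heq : h k = h i₁ :=
      mul_inv_eq_one.mp (hK i₀ k i₁ (Ne.symm hk) (Ne.symm (hi₁ ⟨k, hk⟩)) hmem)
    exact heq ▸ hh k

end Subgroup

section CosetAction

open Subgroup

variable {G : Type*} [Group G] {H : Subgroup G}

lemma rightCosetMul_mk_eq_mk_iff (a g t : G) :
    rightCosetMul H g (Quotient.mk _ a⁻¹) = Quotient.mk _ (a⁻¹ * t) ↔
      g * t⁻¹ ∈ MulAut.conj a • H := by
  change Quotient.mk _ (a⁻¹ * g) = _ ↔ _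
  rw [Quotient.eq, QuotientGroup.rightRel_apply, mem_conj_smul_iff, ← inv_mem_iff]
  simp [mul_assoc]

theorem isBinaryCosetAction_iff : IsBinaryCosetAction H ↔
    ∀ (n : ℕ) (a t : Fin n → G),
      (∀ i j, ∃ g, g * (t i)⁻¹ ∈ MulAut.conj (a i) • H ∧ g * (t j)⁻¹ ∈ MulAut.conj (a j) • H) →
      ∃ g, ∀ k, g * (t k)⁻¹ ∈ MulAut.conj (a k) • H := by
  constructor
  · intro hbin n a t hpair
    simpa only [rightCosetMul_mk_eq_mk_iff] using
      hbin n (fun k => Quotient.mk _ (a k)⁻¹) (fun k => Quotient.mk _ ((a k)⁻¹ * t k))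
        (by simpa only [rightCosetMul_mk_eq_mk_iff] using hpair)
  · intro h n I J hpair
    obtain ⟨a, t, rfl, rfl⟩ : ∃ a t : Fin n → G, I = (fun k => Quotient.mk _ (a k)⁻¹) ∧
        J = fun k => Quotient.mk _ ((a k)⁻¹ * t k) :=
      ⟨fun k => (I k).out⁻¹, fun k => (I k).out⁻¹ * (J k).out, by simp, by simp⟩
    simpa only [rightCosetMul_mk_eq_mk_iff] using
      h n a t (by simpa only [rightCosetMul_mk_eq_mk_iff] using hpair)

theorem isBinaryCosetAction_of_inter_mul_subset_one
    (hH : ∀ a b c : G, MulAut.conj a • H ≠ MulAut.conj b • H →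
      MulAut.conj a • H ≠ MulAut.conj c • H →
      (↑(MulAut.conj a • H) : Set G) ∩ (↑(MulAut.conj b • H) * ↑(MulAut.conj c • H)) ⊆ {1}) :
    IsBinaryCosetAction H :=
  isBinaryCosetAction_iff.mpr fun _ a _ =>
    exists_forall_mul_inv_mem_of_pairwise fun i j k => hH (a i) (a j) (a k)

/-- With `1 ≠ u * v ∈ A`, `u ∈ B`, `v ∈ C`, the cosets `A`, `B v`, `C` meet pairwise, in `u * v`,
`1` and `v`; a common point would lie in `A ∩ C = 1`, forcing `v ∈ B ∩ C` and then `u ∈ A ∩ B`. -/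
theorem Subgroup.IsTI.not_isBinaryCosetAction [Finite G] (hH : H.IsTI) {a b c : G}
    (hab : MulAut.conj a • H ≠ MulAut.conj b • H) (hac : MulAut.conj a • H ≠ MulAut.conj c • H)
    (hbc : MulAut.conj b • H ≠ MulAut.conj c • H)
    (hne : (↑(MulAut.conj a • H) : Set G) ∩ (↑(MulAut.conj b • H) * ↑(MulAut.conj c • H)) ≠ {1}) :
    ¬ IsBinaryCosetAction H := by
  have hone : {1} ⊆ (↑(MulAut.conj a • H) : Set G) ∩
      (↑(MulAut.conj b • H) * ↑(MulAut.conj c • H)) :=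
    Set.singleton_subset_iff.mpr ⟨one_mem _, 1, one_mem _, 1, one_mem _, mul_one 1⟩
  obtain ⟨z, ⟨hzA, u, hu, v, hv, rfl⟩, hz1⟩ := Set.not_subset.mp fun h => hne (h.antisymm hone)
  rw [SetLike.mem_coe] at hzA hu hv
  rw [isBinaryCosetAction_iff]
  intro hbin
  obtain ⟨g, hg⟩ := hbin 3 ![a, b, c] ![1, v, 1] fun i j =>
    ⟨![![1, u * v, 1], ![u * v, v, v], ![1, v, 1]] i j, by
      fin_cases i <;> fin_cases j <;> simp [hzA, hu, hv]⟩
  have hg1 : g = 1 := hH.eq_one_of_mem_conj_smul hac (by simpa using hg 0) (by simpa using hg 2)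
  have hv1 : v = 1 := hH.eq_one_of_mem_conj_smul hbc (by simpa [hg1] using hg 1) hv
  subst hv1
  have hu1 : u = 1 := hH.eq_one_of_mem_conj_smul hab (by simpa only [mul_one] using hzA) hu
  simp [hu1] at hz1

end CosetAction

theorem stmt1 {G : Type*} [Group G] [Finite G] (H : Subgroup G)
    (hTI : ∀ g : G, H ⊓ Subgroup.map (MulAut.conj g).toMonoidHom H = H ∨
      H ⊓ Subgroup.map (MulAut.conj g).toMonoidHom H = ⊥) :
    ¬ IsBinaryCosetAction H ↔
      ∃ H₁ H₂ H₃ : Subgroup G,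
        (∃ a : G, H₁ = Subgroup.map (MulAut.conj a).toMonoidHom H) ∧
        (∃ b : G, H₂ = Subgroup.map (MulAut.conj b).toMonoidHom H) ∧
        (∃ c : G, H₃ = Subgroup.map (MulAut.conj c).toMonoidHom H) ∧
        H₁ ≠ H₂ ∧ H₁ ≠ H₃ ∧ H₂ ≠ H₃ ∧
        ((H₁ : Set G) ∩ ((H₂ : Set G) * (H₃ : Set G)) ≠ {1}) := by
  have hH : H.IsTI := hTI
  constructor
  · intro hnb
    by_contra! hno
    refine hnb (isBinaryCosetAction_of_inter_mul_subset_one fun a b c hab hac => ?_)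
    by_cases hbc : MulAut.conj b • H = MulAut.conj c • H
    · rw [hbc, coe_mul_coe, ← Subgroup.coe_inf, hH.conj_smul_inf_eq_bot hac]
      simp
    · exact (hno _ _ _ ⟨a, rfl⟩ ⟨b, rfl⟩ ⟨c, rfl⟩ hab hac hbc).subset
  · rintro ⟨_, _, _, ⟨a, rfl⟩, ⟨b, rfl⟩, ⟨c, rfl⟩, hab, hac, hbc, hne⟩
    exact hH.not_isBinaryCosetAction hab hac hbc hne
end

section
/- Let G be a finite group, let C be a conjugacy class of G consisting of involutions, and suppose the graph Γ(C) has no edges, i.e., there do not exist distinct commuting x, y ∈ C with xy ∈ C. Let h ∈ C and H = ⟨h⟩ (a subgroup of order 2). Then the action of G on the set of right cosets of H by right multiplication is binary. -/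
/-!
For fixed cosets `I k` and `J k`, the elements `g` with `I k • g = J k` form a coset of a
conjugate of `H = ⟨h⟩`, i.e. a pair `{g, g c}` with `c` a conjugate of `h`. Such pairs are
cliques of the Cayley graph `Cay(G, C)`, and `2`-relatedness says they pairwise intersect.
Pairwise intersecting cliques of a triangle-free graph have a common vertex, and a triangle
`g₁, g₂, g₃` in `Cay(G, C)` would give involutions `g₁⁻¹ g₂`, `g₂⁻¹ g₃` in `C` whose product
`g₁⁻¹ g₃` is again in `C`, hence two commuting elements of `C` joined in `Γ(C)`.
-/

open scoped Pointwise MatrixGroups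

theorem SimpleGraph.CliqueFree.exists_forall_mem_of_isClique {V ι : Type*} [Nonempty V]
    {Γ : SimpleGraph V} (hΓ : Γ.CliqueFree 3) {S : ι → Set V} (hS : ∀ k, Γ.IsClique (S k))
    (hmeet : ∀ i j, (S i ∩ S j).Nonempty) : ∃ v, ∀ k, v ∈ S k := by
  classical
  have triangle (a b c : V) (hab : Γ.Adj a b) (hac : Γ.Adj a c) (hbc : Γ.Adj b c) : False :=
    hΓ {a, b, c} (SimpleGraph.is3Clique_triple_iff.2 ⟨hab, hac, hbc⟩)
  by_contra! hnone
  obtain ⟨i, -⟩ := hnone (Classical.arbitrary V)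
  obtain ⟨a, ha, -⟩ := hmeet i i
  obtain ⟨ka, hka⟩ := hnone a
  obtain ⟨b, hbi, hbka⟩ := hmeet i ka
  have hab : a ≠ b := fun e => hka (e ▸ hbka)
  obtain ⟨kb, hkb⟩ := hnone b
  obtain ⟨d, hdi, hdkb⟩ := hmeet i kb
  have hda : d = a := by
    by_contra hda
    exact triangle a b d (hS i ha hbi hab) (hS i ha hdi (Ne.symm hda))
      (hS i hbi hdi fun e => hkb (e ▸ hdkb))
  subst hda
  obtain ⟨c, hcka, hckb⟩ := hmeet ka kb
  exact triangle d b c (hS i ha hbi hab) (hS kb hdkb hckb fun e => hka (e ▸ hcka))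
    (hS ka hbka hcka fun e => hkb (e ▸ hckb))

section Involutions

variable {G : Type*} [Group G] {C : Set G}

theorem mulCayley_adj_of_forall_orderOf_eq_two (hC : ∀ x ∈ C, orderOf x = 2) (u v : G) :
    (SimpleGraph.mulCayley C).Adj u v ↔ u ≠ v ∧ u⁻¹ * v ∈ C := by
  rw [SimpleGraph.mulCayley_adj]
  refine and_congr_right fun _ => or_iff_left_of_imp fun hvu => ?_
  convert hvu using 1
  rw [← inv_eq_self_of_orderOf_eq_two (hC _ hvu), mul_inv_rev, inv_inv]

theorem cliqueFree_three_mulCayley_of_not_gammaAdj (hC : ∀ x ∈ C, orderOf x = 2)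
    (hedgeless : ¬ ∃ x y : G, gammaAdj C x y) : (SimpleGraph.mulCayley C).CliqueFree 3 := by
  classical
  intro s hs
  obtain ⟨a, b, c, hab, hac, hbc, -⟩ := SimpleGraph.is3Clique_iff.1 hs
  simp only [mulCayley_adj_of_forall_orderOf_eq_two hC] at hab hac hbc
  set p := a⁻¹ * b
  set q := b⁻¹ * c
  have hpq : p * q = a⁻¹ * c := by simp only [p, q, mul_assoc, mul_inv_cancel_left]
  have hpqC : p * q ∈ C := hpq ▸ hac.2
  have hq_inv : q⁻¹ = q := inv_eq_self_of_orderOf_eq_two (hC q hbc.2)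
  refine hedgeless ⟨p, q, hab.2, hbc.2, fun e => ?_, ?_, Or.inl (by rwa [hq_inv])⟩
  · have h1 : orderOf (p * q) = 1 := by
      rw [e, ← pow_two, ← hC q hbc.2, pow_orderOf_eq_one, orderOf_one]
    exact absurd (hC _ hpqC) (by omega)
  · -- an involution `p * q` equals its inverse `q⁻¹ * p⁻¹ = q * p`
    have := inv_eq_self_of_orderOf_eq_two (hC _ hpqC)
    rwa [mul_inv_rev, hq_inv, inv_eq_self_of_orderOf_eq_two (hC p hab.2), eq_comm] at this

theorem eq_one_or_eq_of_mem_zpowers_of_orderOf_eq_two {h x : G} (hh : orderOf h = 2)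
    (hx : x ∈ Subgroup.zpowers h) : x = 1 ∨ x = h := by
  classical
  rw [(orderOf_pos_iff.1 (by omega)).mem_zpowers_iff_mem_range_orderOf, hh] at hx
  obtain ⟨k, hk, rfl⟩ : ∃ k ≤ 1, h ^ k = x := by simpa using hx
  interval_cases k <;> simp

end Involutions

section RightCosetMul

variable {G : Type*} [Group G] (H : Subgroup G)

theorem rightCosetMul_mul (g g' : G) (q : Quotient (QuotientGroup.rightRel H)) :
    rightCosetMul H (g * g') q = rightCosetMul H g' (rightCosetMul H g q) := by
  induction q using Quotient.inductionOn
  simp [rightCosetMul, mul_assoc]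

theorem exists_conj_mem_of_rightCosetMul_eq {g g' : G}
    {q r : Quotient (QuotientGroup.rightRel H)}
    (hg : rightCosetMul H g q = r) (hg' : rightCosetMul H g' q = r) :
    ∃ y : G, y * (g⁻¹ * g') * y⁻¹ ∈ H := by
  have hfix : rightCosetMul H (g⁻¹ * g') r = r := by
    rw [← hg, ← rightCosetMul_mul, mul_inv_cancel_left, hg', hg]
  induction r using Quotient.inductionOn with
  | h y =>
    refine ⟨y, ?_⟩
    have := QuotientGroup.rightRel_apply.mp (Quotient.exact hfix)
    simpa [mul_assoc] using H.inv_mem this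

theorem isClique_mulCayley_setOf_rightCosetMul_eq {C : Set G}
    (hHC : ∀ x ∈ H, x ≠ 1 → ∀ y : G, y⁻¹ * x * y ∈ C)
    (q r : Quotient (QuotientGroup.rightRel H)) :
    (SimpleGraph.mulCayley C).IsClique {g | rightCosetMul H g q = r} := by
  intro g hg g' hg' hne
  obtain ⟨y, hy⟩ := exists_conj_mem_of_rightCosetMul_eq H hg hg'
  have hy1 : y * (g⁻¹ * g') * y⁻¹ ≠ 1 := by
    simpa [inv_mul_eq_one] using hne
  rw [SimpleGraph.mulCayley_adj]
  exact ⟨hne, Or.inl (by simpa [mul_assoc] using hHC _ hy hy1 y)⟩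

end RightCosetMul

theorem stmt2_general {G : Type*} [Group G] (C : Set G)
    (hclass : ∃ t : G, C = {x : G | IsConj t x})
    (hinv : ∀ x ∈ C, orderOf x = 2)
    (hedgeless : ¬ ∃ x y : G, gammaAdj C x y)
    (h : G) (hh : h ∈ C) :
    IsBinaryCosetAction (Subgroup.zpowers h) := by
  obtain ⟨t, rfl⟩ := hclass
  have hconj : ∀ x ∈ Subgroup.zpowers h, x ≠ 1 → ∀ y : G, y⁻¹ * x * y ∈ {x | IsConj t x} := by
    intro x hx hx1 y
    obtain rfl := (eq_one_or_eq_of_mem_zpowers_of_orderOf_eq_two (hinv h hh) hx).resolve_left hx1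
    exact hh.trans (isConj_iff.2 ⟨y⁻¹, by simp⟩)
  intro n I J hIJ
  have hΓ := cliqueFree_three_mulCayley_of_not_gammaAdj hinv hedgeless
  exact hΓ.exists_forall_mem_of_isClique
    (fun k => isClique_mulCayley_setOf_rightCosetMul_eq _ hconj (I k) (J k)) hIJ

theorem stmt2 {G : Type*} [Group G] [Finite G] (C : Set G)
    (hclass : ∃ t : G, C = {x : G | IsConj t x})
    (hinv : ∀ x ∈ C, orderOf x = 2)
    (hedgeless : ¬ ∃ x y : G, gammaAdj C x y)
    (h : G) (hh : h ∈ C) :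
    IsBinaryCosetAction (Subgroup.zpowers h) :=
  stmt2_general C hclass hinv hedgeless h hh
end

section
/- Let G be a finite group containing a single conjugacy class C of involutions (so C is exactly the set of elements of order 2 in G, and they are all conjugate). Let X be the vertex set of a connected component of the graph Γ(C), and let N = {g ∈ G : g⁻¹Xg = X} be the normalizer in G of X. Then either X = C, or N ∩ ⟨C⟩ is a strongly embedded subgroup of ⟨C⟩. -/
open scoped Pointwise MatrixGroups

/-- A subgroup `M` of a finite group `L` is strongly embedded if it is proper, of even
order, and `M ∩ g⁻¹Mg` has odd order for every `g ∈ L \ M`. -/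
def StronglyEmbedded {L : Type*} [Group L] (M : Subgroup L) : Prop :=
  M ≠ ⊤ ∧ Even (Nat.card M) ∧
    ∀ g : L, g ∉ M → Odd (Nat.card {x : L // x ∈ M ∧ g * x * g⁻¹ ∈ M})

/-!
Two involutions `c` and `t` generate a dihedral group in which `c * t` has order `n`. If `n` is
even, `(c * t) ^ (n / 2)` is an involution commuting with both, so `t` lies in the component of
`c`; if `n` is odd, `t` is conjugate to `c` by a power of `c * t`. Either way, every involution
normalising the component `X` of `c` lies in `X`. Hence an involution of `N ∩ gNg⁻¹` lies in
both `X` and `gXg⁻¹`, which forces `g ∈ N`, so by Cauchy's theorem these intersections have odd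
order; and an involution outside `X` lies in `⟨C⟩ \ N`.
-/

section

variable {G : Type*} [Group G]

instance gammaAdj.instSymm (C : Set G) : Std.Symm (gammaAdj C) :=
  ⟨fun _ _ h => ⟨h.2.1, h.1, h.2.2.1.symm, h.2.2.2.1.symm, h.2.2.2.2.symm⟩⟩

def gammaComponent (C : Set G) (c : G) : Set G :=
  {x | Relation.ReflTransGen (gammaAdj C) c x}

@[simp]
lemma mem_gammaComponent {C : Set G} {c x : G} :
    x ∈ gammaComponent C c ↔ Relation.ReflTransGen (gammaAdj C) c x :=
  Iff.rfl

section Component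

variable {C : Set G}

lemma gammaComponent_subset {c : G} (hc : c ∈ C) : gammaComponent C c ⊆ C := by
  intro x hx
  induction hx with
  | refl => exact hc
  | tail _ hadj _ => exact hadj.2.1

lemma gammaComponent_eq_iff {c d : G} :
    gammaComponent C c = gammaComponent C d ↔ d ∈ gammaComponent C c := by
  refine ⟨fun h => h ▸ Relation.ReflTransGen.refl, fun hcd => ?_⟩
  ext x
  exact ⟨fun hx => (Std.Symm.symm _ _ hcd).trans hx, fun hx => hcd.trans hx⟩

lemma gammaAdj_map {F : Type*} [FunLike F G G] [MonoidHomClass F G G] {φ : F}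
    (hφ : Function.Injective φ) (hC : ∀ x ∈ C, φ x ∈ C) {x y : G}
    (h : gammaAdj C x y) : gammaAdj C (φ x) (φ y) := by
  obtain ⟨hx, hy, hne, hcomm, hxy | hyx⟩ := h
  · refine ⟨hC x hx, hC y hy, hφ.ne hne, hcomm.map φ, Or.inl ?_⟩
    simpa only [map_mul, map_inv] using hC _ hxy
  · refine ⟨hC x hx, hC y hy, hφ.ne hne, hcomm.map φ, Or.inr ?_⟩
    simpa only [map_mul, map_inv] using hC _ hyx

variable (hC : ∀ g : G, ∀ x ∈ C, g * x * g⁻¹ ∈ C)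
include hC

lemma reflTransGen_gammaAdj_conj (g : G) {a b : G}
    (h : Relation.ReflTransGen (gammaAdj C) a b) :
    Relation.ReflTransGen (gammaAdj C) (g * a * g⁻¹) (g * b * g⁻¹) :=
  h.lift (MulAut.conj g) fun _ _ hab =>
    gammaAdj_map (MulAut.conj g).injective (fun x hx => hC g x hx) hab

lemma image_conj_gammaComponent (g c : G) :
    (fun x => g⁻¹ * x * g) '' gammaComponent C c = gammaComponent C (g⁻¹ * c * g) := by
  ext x
  constructor
  · rintro ⟨y, hy, rfl⟩
    simpa only [mem_gammaComponent, inv_inv] using reflTransGen_gammaAdj_conj hC g⁻¹ hy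
  · intro hx
    refine ⟨g * x * g⁻¹, ?_, by group⟩
    simpa only [mem_gammaComponent, mul_assoc, mul_inv_cancel_left, mul_inv_cancel, mul_one]
      using reflTransGen_gammaAdj_conj hC g hx

lemma mem_iff_conj_mem_gammaComponent {c : G} {N : Subgroup G}
    (hN : (N : Set G) = {g | (fun x => g⁻¹ * x * g) '' gammaComponent C c = gammaComponent C c})
    (g : G) : g ∈ N ↔ g⁻¹ * c * g ∈ gammaComponent C c := by
  rw [← SetLike.mem_coe, hN, Set.mem_ofPred_eq, image_conj_gammaComponent hC, eq_comm,
    gammaComponent_eq_iff]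

end Component

abbrev involutions (G : Type*) [Group G] : Set G := {x | orderOf x = 2}

section Involutions

variable {a b c t : G}

lemma conj_mem_involutions (g : G) {x : G} (hx : x ∈ involutions G) :
    g * x * g⁻¹ ∈ involutions G := by
  rw [Set.mem_ofPred_eq, ← MulAut.conj_apply, MulEquiv.orderOf_eq]
  exact hx

lemma sq_eq_one_of_orderOf_eq_two (h : orderOf a = 2) : a ^ 2 = 1 :=
  h ▸ pow_orderOf_eq_one a

lemma reflTransGen_gammaAdj_involutions_of_commute (ha : orderOf a = 2) (hb : orderOf b = 2)
    (hab : Commute a b) : Relation.ReflTransGen (gammaAdj (involutions G)) a b := by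
  rcases eq_or_ne a b with rfl | hne
  · exact .refl
  refine .single ⟨ha, hb, hne, hab, Or.inl ?_⟩
  rw [inv_eq_self_of_orderOf_eq_two hb]
  refine orderOf_eq_prime_iff.mpr ⟨?_, fun h => hne ?_⟩
  · rw [hab.mul_pow, sq_eq_one_of_orderOf_eq_two ha, sq_eq_one_of_orderOf_eq_two hb, one_mul]
  · rw [← inv_eq_self_of_orderOf_eq_two hb, eq_inv_iff_mul_eq_one, h]

lemma conj_pow_mul_eq_inv (hc : orderOf c = 2) (ht : orderOf t = 2) (k : ℕ) :
    c * (c * t) ^ k * c⁻¹ = ((c * t) ^ k)⁻¹ := by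
  rw [← conj_pow, ← inv_pow, mul_inv_rev, inv_eq_self_of_orderOf_eq_two hc,
    inv_eq_self_of_orderOf_eq_two ht, ← mul_assoc, ← sq, sq_eq_one_of_orderOf_eq_two hc,
    one_mul]

lemma mem_gammaComponent_involutions_of_two_dvd (hc : orderOf c = 2) (ht : orderOf t = 2)
    (h0 : orderOf (c * t) ≠ 0) (h2 : 2 ∣ orderOf (c * t)) :
    t ∈ gammaComponent (involutions G) c := by
  set z := (c * t) ^ (orderOf (c * t) / 2)
  have hz : orderOf z = 2 := orderOf_pow_orderOf_div h0 h2
  have hcz : Commute c z := by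
    have := conj_pow_mul_eq_inv hc ht (orderOf (c * t) / 2)
    rwa [inv_eq_self_of_orderOf_eq_two hz, mul_inv_eq_iff_eq_mul] at this
  have htz : Commute t z := by
    simpa only [inv_mul_cancel_left]
      using hcz.inv_left.mul_left ((Commute.refl (c * t)).pow_right _)
  exact (reflTransGen_gammaAdj_involutions_of_commute hc hz hcz).trans
    (Std.Symm.symm _ _ (reflTransGen_gammaAdj_involutions_of_commute ht hz htz))

lemma exists_pow_conj_eq_of_odd (hc : orderOf c = 2) (ht : orderOf t = 2)
    (hodd : Odd (orderOf (c * t))) : ∃ k : ℕ, ((c * t) ^ k)⁻¹ * c * (c * t) ^ k = t := by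
  obtain ⟨k, hk⟩ := hodd
  refine ⟨k + 1, ?_⟩
  set w := (c * t) ^ (k + 1)
  have hww : w * w = c * t := by
    rw [← pow_add, show k + 1 + (k + 1) = orderOf (c * t) + 1 by omega, pow_succ,
      pow_orderOf_eq_one, one_mul]
  have hcw : c * w = w⁻¹ * c := mul_inv_eq_iff_eq_mul.mp (conj_pow_mul_eq_inv hc ht (k + 1))
  rw [mul_assoc, hcw, ← mul_assoc, ← mul_inv_rev, hww, mul_inv_rev, inv_mul_cancel_right,
    inv_eq_self_of_orderOf_eq_two ht]

end Involutions

section Normalizer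

variable {c : G} {N : Subgroup G}
  (hN : (N : Set G) =
    {g | (fun x => g⁻¹ * x * g) '' gammaComponent (involutions G) c =
      gammaComponent (involutions G) c})
include hN

lemma basepoint_mem_stabilizer : c ∈ N := by
  rw [mem_iff_conj_mem_gammaComponent conj_mem_involutions hN, inv_mul_cancel, one_mul]
  exact .refl

lemma involution_mem_gammaComponent_of_mem_stabilizer [Finite G] (hc : orderOf c = 2) {t : G}
    (ht : orderOf t = 2) (htN : t ∈ N) : t ∈ gammaComponent (involutions G) c := by
  rcases Nat.even_or_odd (orderOf (c * t)) with heven | hodd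
  · exact mem_gammaComponent_involutions_of_two_dvd hc ht
      (isOfFinOrder_of_finite _).orderOf_pos.ne' heven.two_dvd
  · obtain ⟨k, hk⟩ := exists_pow_conj_eq_of_odd hc ht hodd
    have hw : (c * t) ^ k ∈ N := N.pow_mem (N.mul_mem (basepoint_mem_stabilizer hN) htN) k
    rw [← hk]
    exact (mem_iff_conj_mem_gammaComponent conj_mem_involutions hN _).mp hw

lemma mem_stabilizer_of_involution_conj_mem [Finite G] (hc : orderOf c = 2) {g τ : G}
    (hτ : orderOf τ = 2) (hτN : τ ∈ N) (hgτN : g * τ * g⁻¹ ∈ N) : g ∈ N := by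
  have hτX := involution_mem_gammaComponent_of_mem_stabilizer hN hc hτ hτN
  have hgτX := involution_mem_gammaComponent_of_mem_stabilizer hN hc
    (conj_mem_involutions g hτ) hgτN
  have := reflTransGen_gammaAdj_conj conj_mem_involutions g⁻¹ hgτX
  rw [inv_inv, show g⁻¹ * (g * τ * g⁻¹) * g = τ by group] at this
  exact (mem_iff_conj_mem_gammaComponent conj_mem_involutions hN g).mpr
    (hτX.trans (Std.Symm.symm _ _ this))

end Normalizer

lemma stronglyEmbedded_of_forall_involution {L : Type*} [Group L] [Finite L] {M : Subgroup L}
    (hM : M ≠ ⊤) (hinv : ∃ x ∈ M, orderOf x = 2)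
    (hconj : ∀ g x : L, orderOf x = 2 → x ∈ M → g * x * g⁻¹ ∈ M → g ∈ M) :
    StronglyEmbedded M := by
  refine ⟨hM, ?_, fun g hg => ?_⟩
  · obtain ⟨x, hxM, hx⟩ := hinv
    exact even_iff_two_dvd.mpr (hx ▸ M.orderOf_dvd_natCard hxM)
  · change Odd (Nat.card (M ⊓ M.comap (MulAut.conj g).toMonoidHom : Subgroup L))
    refine Nat.not_even_iff_odd.mp fun heven => ?_
    obtain ⟨⟨x, hxM, hgxM⟩, hx⟩ := exists_prime_orderOf_dvd_card' 2 heven.two_dvd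
    exact hg (hconj g x (by rwa [← Subgroup.orderOf_mk]) hxM hgxM)

end

theorem stmt4_general {G : Type*} [Group G] [Finite G] (C : Set G)
    (hC : C = {x : G | orderOf x = 2})
    (c : G) (hc : c ∈ C)
    (X : Set G) (hX : X = {x : G | Relation.ReflTransGen (gammaAdj C) c x})
    (N : Subgroup G) (hN : (N : Set G) = {g : G | (fun x => g⁻¹ * x * g) '' X = X}) :
    X = C ∨
      StronglyEmbedded ((N ⊓ Subgroup.closure C).subgroupOf (Subgroup.closure C)) := by
  obtain rfl : C = involutions G := hC
  obtain rfl : X = gammaComponent (involutions G) c := hX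
  refine or_iff_not_imp_left.mpr fun hXC => ?_
  rw [Subgroup.inf_subgroupOf_right]
  refine stronglyEmbedded_of_forall_involution ?_ ?_ ?_
  · obtain ⟨y, hy, hyX⟩ := Set.exists_of_ssubset ((gammaComponent_subset hc).ssubset_of_ne hXC)
    intro htop
    have hyN : y ∈ N := Subgroup.mem_subgroupOf.mp (htop ▸ Subgroup.mem_top
      (⟨y, Subgroup.subset_closure hy⟩ : Subgroup.closure (involutions G)))
    exact hyX (involution_mem_gammaComponent_of_mem_stabilizer hN hc hy hyN)
  · exact ⟨⟨c, Subgroup.subset_closure hc⟩,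
      Subgroup.mem_subgroupOf.mpr (basepoint_mem_stabilizer hN), by rwa [Subgroup.orderOf_mk]⟩
  · intro g x hx hxN hgxN
    rw [← Subgroup.orderOf_coe] at hx
    exact mem_stabilizer_of_involution_conj_mem hN hc hx hxN hgxN

theorem stmt4 {G : Type*} [Group G] [Finite G] (C : Set G)
    (hC : C = {x : G | orderOf x = 2})
    (hconj : ∀ x ∈ C, ∀ y ∈ C, IsConj x y)
    (c : G) (hc : c ∈ C)
    (X : Set G) (hX : X = {x : G | Relation.ReflTransGen (gammaAdj C) c x})
    (N : Subgroup G) (hN : (N : Set G) = {g : G | (fun x => g⁻¹ * x * g) '' X = X}) :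
    X = C ∨
      StronglyEmbedded ((N ⊓ Subgroup.closure C).subgroupOf (Subgroup.closure C)) :=
  stmt4_general C hC c hc X hX N hN
end

section
/- Let F be a finite field of characteristic 2 with |F| ≥ 4, let G = SL₂(F), and let H be a Sylow 2-subgroup of G. Then the action of G on the set of right cosets of H by right multiplication is binary. -/
open scoped Pointwise MatrixGroups

/-! In characteristic 2 an element of `SL(2, F)` fixing a nonzero vector has trace `2 = 0`, so by
Cayley–Hamilton it squares to `-1 = 1`; hence the stabiliser of a nonzero vector is a 2-group. A Sylow
2-subgroup fixes some nonzero vector, because `F²` has an even number of elements and `0` is fixed, so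
it is that stabiliser, and the coset action becomes the action of `SL(2, F)` on the orbit of the vector.

The action on `F²` is binary. If two vectors `vᵢ, vⱼ` of the tuple are independent, an element moving
them correctly moves every other `vₖ` correctly, since `vₖ` is determined by its determinant pairings
with `vᵢ` and `vⱼ`, which are invariant. Otherwise all the vectors lie on one line. -/

def IsBinaryAction (G X : Type*) [Group G] [MulAction G X] : Prop :=
  ∀ (n : ℕ) (v w : Fin n → X), (∀ i j, ∃ g : G, g • v i = w i ∧ g • v j = w j) →
    ∃ g : G, ∀ k, g • v k = w k

lemma rightCosetMul_mk_eq_mk_iff_s5 {G : Type*} [Group G] (H : Subgroup G) (g a b : G) :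
    rightCosetMul H g ⟦a⟧ = ⟦b⟧ ↔ b * (a * g)⁻¹ ∈ H :=
  Quotient.eq.trans QuotientGroup.rightRel_apply

/-- The coset `H a` of `H = stabilizer G x` corresponds to the point `a⁻¹ • x`, and right
multiplication by `g` to the action of `g⁻¹`. -/
lemma isBinaryCosetAction_stabilizer {G X : Type*} [Group G] [MulAction G X]
    (h : IsBinaryAction G X) (x : X) : IsBinaryCosetAction (MulAction.stabilizer G x) := by
  have key : ∀ g a b : G, rightCosetMul (MulAction.stabilizer G x) g ⟦a⟧ = ⟦b⟧ ↔
      g⁻¹ • a⁻¹ • x = b⁻¹ • x := by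
    intro g a b
    rw [rightCosetMul_mk_eq_mk_iff_s5, MulAction.mem_stabilizer_iff, mul_inv_rev, ← smul_smul,
      ← smul_smul, eq_inv_smul_iff]
  intro n I J hIJ
  choose a ha using fun k => Quotient.exists_rep (I k)
  choose b hb using fun k => Quotient.exists_rep (J k)
  simp only [← ha, ← hb, key] at hIJ ⊢
  obtain ⟨g, hg⟩ := h n (fun k => (a k)⁻¹ • x) (fun k => (b k)⁻¹ • x) fun i j => by
    obtain ⟨g, hgi, hgj⟩ := hIJ i j
    exact ⟨g⁻¹, hgi, hgj⟩
  exact ⟨g⁻¹, by simpa using hg⟩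

section detPair

variable {R : Type*} [CommRing R]

def detPair (u v : Fin 2 → R) : R := u 0 * v 1 - u 1 * v 0

lemma SL2_smul_apply (g : SL(2, R)) (v : Fin 2 → R) (i : Fin 2) :
    (g • v) i = g i 0 * v 0 + g i 1 * v 1 := by
  simp [Matrix.SpecialLinearGroup.smul_def, Matrix.mulVec, dotProduct, Fin.sum_univ_two]

lemma detPair_smul (g : SL(2, R)) (u v : Fin 2 → R) : detPair (g • u) (g • v) = detPair u v := by
  have hg : g 0 0 * g 1 1 - g 0 1 * g 1 0 = 1 := by rw [← Matrix.det_fin_two]; exact g.2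
  simp only [detPair, SL2_smul_apply]
  linear_combination (u 0 * v 1 - u 1 * v 0) * hg

lemma eq_of_detPair_eq [NoZeroDivisors R] {a b c c' : Fin 2 → R} (hab : detPair a b ≠ 0)
    (ha : detPair a c = detPair a c') (hb : detPair b c = detPair b c') : c = c' := by
  have h0 : detPair a b * (c 0 - c' 0) = 0 := by
    unfold detPair at *; linear_combination b 0 * ha - a 0 * hb
  have h1 : detPair a b * (c 1 - c' 1) = 0 := by
    unfold detPair at *; linear_combination b 1 * ha - a 1 * hb
  ext i
  fin_cases i
  · exact sub_eq_zero.mp ((mul_eq_zero.mp h0).resolve_left hab)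
  · exact sub_eq_zero.mp ((mul_eq_zero.mp h1).resolve_left hab)

end detPair

lemma exists_eq_smul_of_detPair_eq_zero {F : Type*} [Field F] {u w : Fin 2 → F} (hu : u ≠ 0)
    (h : detPair u w = 0) : ∃ t : F, w = t • u := by
  unfold detPair at h
  by_cases h0 : u 0 = 0
  · have h1 : u 1 ≠ 0 := fun h1 => hu (by ext i; fin_cases i <;> assumption)
    have hw0 : w 0 = 0 := by simpa [h0, h1] using h
    refine ⟨w 1 / u 1, ?_⟩
    ext i
    fin_cases i <;> simp [h0, h1, hw0]
  · refine ⟨w 0 / u 0, ?_⟩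
    ext i
    fin_cases i
    · simp [h0]
    · show w 1 = w 0 / u 0 * u 1
      field_simp
      linear_combination h

theorem isBinaryAction_SL2 (F : Type*) [Field F] : IsBinaryAction SL(2, F) (Fin 2 → F) := by
  intro n v w h
  have hdet : ∀ i j, detPair (w i) (w j) = detPair (v i) (v j) := fun i j => by
    obtain ⟨g, hgi, hgj⟩ := h i j
    rw [← hgi, ← hgj, detPair_smul]
  by_cases hbasis : ∃ i j, detPair (v i) (v j) ≠ 0
  · obtain ⟨i, j, hij⟩ := hbasis
    obtain ⟨g, hgi, hgj⟩ := h i j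
    refine ⟨g, fun k => eq_of_detPair_eq (a := w i) (b := w j) ?_ ?_ ?_⟩
    · rwa [hdet]
    · rw [← hgi, detPair_smul, hgi, hdet]
    · rw [← hgj, detPair_smul, hgj, hdet]
  push Not at hbasis
  by_cases hzero : ∀ i, v i = 0
  · refine ⟨1, fun k => ?_⟩
    obtain ⟨g, hg, -⟩ := h k k
    rw [← hg, hzero k, smul_zero, smul_zero]
  push Not at hzero
  obtain ⟨i, hi⟩ := hzero
  obtain ⟨g, hg, -⟩ := h i i
  refine ⟨g, fun k => ?_⟩
  obtain ⟨t, ht⟩ := exists_eq_smul_of_detPair_eq_zero hi (hbasis i k)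
  obtain ⟨g', hg'i, hg'k⟩ := h i k
  rw [← hg'k, ht, smul_comm, smul_comm g', hg, hg'i]

lemma sq_eq_one_of_smul_eq_self {R : Type*} [CommRing R] [IsDomain R] [CharP R 2] (g : SL(2, R))
    {v : Fin 2 → R} (hv : v ≠ 0) (hg : g • v = v) : g ^ 2 = 1 := by
  have h2 : (2 : R) = 0 := CharTwo.two_eq_zero
  have hdet : g 0 0 * g 1 1 - g 0 1 * g 1 0 = 1 := by rw [← Matrix.det_fin_two]; exact g.2
  have hfix : ((g : Matrix (Fin 2) (Fin 2) R) - 1).det = 0 :=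
    Matrix.exists_mulVec_eq_zero_iff.mp ⟨v, hv, by
      rw [Matrix.sub_mulVec, Matrix.one_mulVec, ← Matrix.smul_eq_mulVec,
        ← Matrix.SpecialLinearGroup.smul_def, hg, sub_self]⟩
  have htrace : g 0 0 + g 1 1 = 0 := by
    simp only [Matrix.det_fin_two, Matrix.sub_apply, Matrix.one_apply_eq,
      Matrix.one_apply_ne zero_ne_one, Matrix.one_apply_ne one_ne_zero, sub_zero] at hfix
    linear_combination hdet - hfix + h2
  ext i j
  fin_cases i <;> fin_cases j <;>
    simp only [sq, Matrix.SpecialLinearGroup.coe_mul, Matrix.SpecialLinearGroup.coe_one,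
      Matrix.mul_apply, Fin.sum_univ_two, Matrix.one_apply_eq, Matrix.one_apply_ne zero_ne_one,
      Matrix.one_apply_ne one_ne_zero, Fin.zero_eta, Fin.mk_one]
  · linear_combination g 0 0 * htrace - hdet - h2
  · linear_combination g 0 1 * htrace
  · linear_combination g 1 0 * htrace
  · linear_combination g 1 1 * htrace - hdet - h2

lemma Sylow.exists_eq_stabilizer_SL2 {F : Type*} [Field F] [Fintype F] [CharP F 2]
    (P : Sylow 2 SL(2, F)) :
    ∃ v : Fin 2 → F, (P : Subgroup SL(2, F)) = MulAction.stabilizer SL(2, F) v := by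
  have hcard : 2 ∣ Nat.card (Fin 2 → F) := by
    rw [Nat.card_fun, Nat.card_eq_fintype_card (α := F)]
    exact dvd_pow ((CharP.cast_eq_zero_iff F 2 _).mp (FiniteField.cast_card_eq_zero F)) (by simp)
  obtain ⟨v, hv, hv0⟩ := P.isPGroup'.exists_fixed_point_of_prime_dvd_card_of_fixed_point _ hcard
    (a := 0) fun g => smul_zero g
  have hle : (P : Subgroup SL(2, F)) ≤ MulAction.stabilizer SL(2, F) v := fun g hg => hv ⟨g, hg⟩
  refine ⟨v, (P.is_maximal' (fun g => ⟨1, ?_⟩) hle).symm⟩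
  exact Subtype.ext (by simpa using sq_eq_one_of_smul_eq_self g.1 hv0.symm g.2)

theorem stmt5_general {F : Type*} [Field F] [Fintype F] (hchar : ringChar F = 2)
    (P : Sylow 2 (Matrix.SpecialLinearGroup (Fin 2) F)) :
    IsBinaryCosetAction (P : Subgroup (Matrix.SpecialLinearGroup (Fin 2) F)) := by
  have : CharP F 2 := hchar ▸ ringChar.charP F
  obtain ⟨v, hv⟩ := P.exists_eq_stabilizer_SL2
  rw [hv]
  exact isBinaryCosetAction_stabilizer (isBinaryAction_SL2 F) v

theorem stmt5 {F : Type*} [Field F] [Fintype F] (hchar : ringChar F = 2)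
    (hcard : 4 ≤ Fintype.card F)
    (P : Sylow 2 (Matrix.SpecialLinearGroup (Fin 2) F)) :
    IsBinaryCosetAction (P : Subgroup (Matrix.SpecialLinearGroup (Fin 2) F)) :=
  stmt5_general hchar P
end

section
/- Let a ≥ 1 be an integer, let F be a finite field of cardinality 2^{2a+1}, and let θ : F → F be the field automorphism θ(x) = x^{2^{a+1}}. For β₁, β₂ ∈ F define the 4×4 matrices over F: h₁ with rows (1,0,0,0), (0,1,0,0), (β₁,0,1,0), (θ(β₁),β₁,0,1), and h₂ with rows (1,0,β₂,θ(β₂)), (0,1,0,β₂), (0,0,1,0), (0,0,0,1). Then (h₁·h₂)² equals the identity matrix if and only if β₁ = 0 or β₂ = 0. -/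
/-!
Both matrices are unipotent: `h₂ = 1 + N` and `h₁ = (1 + N')ᵀ` with `N ^ 2 = N' ^ 2 = 0`. The field has
characteristic two, so each factor is an involution, and if one parameter vanishes the other factor
is the identity. Conversely, the `(0, 1)` entry of `(h₁ * h₂) ^ 2` is `θ β₂ * β₁`, and `θ` is injective
at `0`.
-/

open Matrix

theorem FiniteField.charP_two_of_card_eq_two_pow {F : Type*} [Field F] [Fintype F] {n : ℕ}
    (hF : Fintype.card F = 2 ^ n) : CharP F 2 := by
  have hcard := FiniteField.cast_card_eq_zero F
  rw [hF, Nat.cast_pow, Nat.cast_ofNat] at hcard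
  exact CharTwo.of_one_ne_zero_of_two_eq_zero one_ne_zero (IsNilpotent.eq_zero ⟨_, hcard⟩)

theorem CharTwo.one_add_sq_eq_one_of_sq_eq_zero {R : Type*} [Ring R] [CharP R 2] {N : R}
    (hN : N ^ 2 = 0) : (1 + N) ^ 2 = 1 := by
  rw [(Commute.one_left N).add_sq, hN, CharTwo.two_eq_zero (R := R), one_pow, zero_mul, zero_mul,
    add_zero, add_zero]

section UnipotentMatrix

variable {R : Type*}

def unipotentMatrix [Zero R] [One R] (b t : R) : Matrix (Fin 4) (Fin 4) R :=
  !![1, 0, b, t; 0, 1, 0, b; 0, 0, 1, 0; 0, 0, 0, 1]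

@[simp]
theorem unipotentMatrix_zero [Zero R] [One R] : unipotentMatrix (0 : R) 0 = 1 := by
  ext i j
  fin_cases i <;> fin_cases j <;> rfl

theorem unipotentMatrix_sq [Ring R] [CharP R 2] (b t : R) : unipotentMatrix b t ^ 2 = 1 := by
  have hsplit : unipotentMatrix b t = 1 + !![0, 0, b, t; 0, 0, 0, b; 0, 0, 0, 0; 0, 0, 0, 0] := by
    ext i j
    fin_cases i <;> fin_cases j <;> simp [unipotentMatrix]
  rw [hsplit]
  refine CharTwo.one_add_sq_eq_one_of_sq_eq_zero ?_
  ext i j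
  fin_cases i <;> fin_cases j <;> simp [sq, Matrix.mul_apply, Fin.sum_univ_four]

theorem transpose_unipotentMatrix_sq [CommRing R] [CharP R 2] (b t : R) :
    (unipotentMatrix b t)ᵀ ^ 2 = 1 := by
  rw [← transpose_pow, unipotentMatrix_sq, transpose_one]

theorem transpose_mul_unipotentMatrix_sq_apply_zero_one [Semiring R] (b₁ t₁ b₂ t₂ : R) :
    (((unipotentMatrix b₁ t₁)ᵀ * unipotentMatrix b₂ t₂) ^ 2) 0 1 = t₂ * b₁ := by
  simp [unipotentMatrix, sq, Matrix.mul_apply, Fin.sum_univ_four]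

end UnipotentMatrix

theorem stmt6_general {a : ℕ} {F : Type*} [Field F] [Fintype F]
    (hF : Fintype.card F = 2 ^ (2 * a + 1))
    (θ : F → F) (hθ : ∀ x : F, θ x = x ^ 2 ^ (a + 1))
    (β₁ β₂ : F) (h₁ h₂ : Matrix (Fin 4) (Fin 4) F)
    (hh₁ : h₁ = !![1, 0, 0, 0; 0, 1, 0, 0; β₁, 0, 1, 0; θ β₁, β₁, 0, 1])
    (hh₂ : h₂ = !![1, 0, β₂, θ β₂; 0, 1, 0, β₂; 0, 0, 1, 0; 0, 0, 0, 1]) :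
    (h₁ * h₂) ^ 2 = 1 ↔ β₁ = 0 ∨ β₂ = 0 := by
  have : CharP F 2 := FiniteField.charP_two_of_card_eq_two_pow hF
  have hθ_eq_zero {x : F} : θ x = 0 ↔ x = 0 := by rw [hθ, pow_eq_zero_iff (by positivity)]
  replace hh₁ : h₁ = (unipotentMatrix β₁ (θ β₁))ᵀ := by
    rw [hh₁]; ext i j; fin_cases i <;> fin_cases j <;> rfl
  replace hh₂ : h₂ = unipotentMatrix β₂ (θ β₂) := hh₂
  subst hh₁ hh₂
  constructor
  · intro h
    have h01 := transpose_mul_unipotentMatrix_sq_apply_zero_one β₁ (θ β₁) β₂ (θ β₂)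
    rw [h, one_apply_ne (by decide), eq_comm, mul_eq_zero, hθ_eq_zero] at h01
    exact h01.symm
  · rintro (rfl | rfl) <;> rw [hθ_eq_zero.mpr rfl, unipotentMatrix_zero]
    · rw [transpose_one, one_mul, unipotentMatrix_sq]
    · rw [mul_one, transpose_unipotentMatrix_sq]

theorem stmt6 {a : ℕ} (ha : 1 ≤ a) {F : Type*} [Field F] [Fintype F]
    (hF : Fintype.card F = 2 ^ (2 * a + 1))
    (θ : F → F) (hθ : ∀ x : F, θ x = x ^ 2 ^ (a + 1))
    (β₁ β₂ : F) (h₁ h₂ : Matrix (Fin 4) (Fin 4) F)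
    (hh₁ : h₁ = !![1, 0, 0, 0; 0, 1, 0, 0; β₁, 0, 1, 0; θ β₁, β₁, 0, 1])
    (hh₂ : h₂ = !![1, 0, β₂, θ β₂; 0, 1, 0, β₂; 0, 0, 1, 0; 0, 0, 0, 1]) :
    (h₁ * h₂) ^ 2 = 1 ↔ β₁ = 0 ∨ β₂ = 0 :=
  stmt6_general hF θ hθ β₁ β₂ h₁ h₂ hh₁ hh₂
end

section
/- Let a ≥ 1 be an integer, let q = 2^{2a+1}, and let F be a finite field of cardinality q². Let C = {x ∈ F : x ≠ 0 and x is a cube in F} be the set of nonzero cubes. Then: (1) the graph with vertex set C, in which distinct x, y ∈ C are joined by an edge if and only if x + y ∈ C, is connected; (2) the set C generates F as an additive group. -/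
/-!
Let `q = 2 ^ (2a+1)`, so that `q + 1 = 3m`, and let `K` be the subfield of order `q`. As
`|Fˣ| = 3 (q - 1) m`, a nonzero `w` is a cube iff `w ^ ((q - 1) m) = 1`; in particular `Kˣ` consists
of cubes. For `z ∉ K` the map `t ↦ (z - t) ^ (q - 1)` is injective on `Kˣ` with values among the
`q + 1` roots of `X ^ (q + 1) - 1`, which also contain the `m` roots of `X ^ m - 1`. Since
`(q - 1) + m > q + 1` once `q ≥ 8`, some `t ∈ Kˣ` makes `z + t = z - t` a cube. So every element is
a sum of at most two nonzero cubes, and every cube outside `K` is adjacent to some `t ∈ Kˣ`, which is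
`1` or adjacent to `1`; multiplying such paths by cubes connects any two vertices.
-/

open Finset Polynomial Relation

namespace FiniteField

variable {F : Type*} [Field F] [Fintype F]

theorem exists_isPrimitiveRoot_of_dvd {d : ℕ} (hd : d ∣ Fintype.card F - 1) :
    ∃ ζ : F, IsPrimitiveRoot ζ d := by
  classical
  obtain ⟨g, hg⟩ := IsCyclic.exists_generator (α := Fˣ)
  have hord : orderOf g = Fintype.card F - 1 := by
    rw [orderOf_eq_card_of_forall_mem_zpowers hg, Nat.card_eq_fintype_card, Fintype.card_units]
  refine ⟨((g ^ (orderOf g / d) : Fˣ) : F), IsPrimitiveRoot.coe_units_iff.mpr ?_⟩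
  simpa only [orderOf_pow_orderOf_div (orderOf_pos g).ne' (hord ▸ hd)] using
    IsPrimitiveRoot.orderOf (g ^ (orderOf g / d))

theorem card_nthRootsFinset_one_of_dvd {d : ℕ} (hd : d ∣ Fintype.card F - 1) :
    #(nthRootsFinset d (1 : F)) = d :=
  (exists_isPrimitiveRoot_of_dvd hd).choose_spec.card_nthRootsFinset

theorem exists_eq_pow_of_pow_eq_one {k M : ℕ} (hkM : Fintype.card F - 1 = k * M) {w : F}
    (hw : w ^ M = 1) : ∃ c, w = c ^ k := by
  obtain ⟨ζ, hζ⟩ := exists_isPrimitiveRoot_of_dvd hkM.symm.dvd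
  have : NeZero (k * M) := ⟨hkM ▸ (Nat.sub_pos_of_lt Fintype.one_lt_card).ne'⟩
  obtain ⟨i, -, rfl⟩ := hζ.eq_pow_of_pow_eq_one (by rw [mul_comm, pow_mul, hw, one_pow])
  obtain ⟨j, rfl⟩ : k ∣ i := by
    have hM : M ≠ 0 := right_ne_zero_of_mul (NeZero.ne (k * M))
    rw [← pow_mul, hζ.pow_eq_one_iff_dvd] at hw
    exact (Nat.mul_dvd_mul_iff_right (Nat.pos_of_ne_zero hM)).mp hw
  exact ⟨ζ ^ j, by rw [← pow_mul, mul_comm]⟩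

end FiniteField

theorem Polynomial.card_nthRootsFinset_le {R : Type*} [CommRing R] [IsDomain R] (n : ℕ) (a : R) :
    #(nthRootsFinset n a) ≤ n := by
  classical
  exact (nthRootsFinset_def n a ▸ Multiset.toFinset_card_le _).trans (card_nthRoots n a)

section Frobenius

variable {F : Type*} [Field F] {p : ℕ} [ExpChar F p] {n : ℕ}

theorem injOn_sub_pow_sub_one {z : F} (hz : z ^ p ^ n ≠ z) :
    Set.InjOn (fun t ↦ (z - t) ^ (p ^ n - 1)) {t | t ^ p ^ n = t} := by
  intro s (hs : s ^ p ^ n = s) t (ht : t ^ p ^ n = t) hst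
  have hpow (w : F) : w ^ p ^ n = w ^ (p ^ n - 1) * w := by
    rw [← pow_succ, Nat.sub_add_cancel (expChar_pow_pos F p n)]
  have key : (z ^ p ^ n - s) * (z - t) = (z ^ p ^ n - t) * (z - s) := by
    calc (z ^ p ^ n - s) * (z - t) = (z - s) ^ p ^ n * (z - t) := by
          rw [sub_pow_expChar_pow, hs]
      _ = (z - t) ^ p ^ n * (z - s) := by
          rw [hpow, hpow (z - t)]; simp only at hst; rw [hst]; ring
      _ = (z ^ p ^ n - t) * (z - s) := by rw [sub_pow_expChar_pow, ht]
  have : (z ^ p ^ n - z) * (s - t) = 0 := by linear_combination key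
  exact sub_eq_zero.mp ((mul_eq_zero.mp this).resolve_left (sub_ne_zero.mpr hz))

variable [Fintype F]

theorem exists_pow_eq_self_and_sub_pow_eq_one (hF : Fintype.card F = (p ^ n) ^ 2) {m : ℕ}
    (hm : m ∣ p ^ n + 1) (hm2 : 2 < m) {z : F} (hz : z ^ p ^ n ≠ z) :
    ∃ t : F, t ^ p ^ n = t ∧ t ≠ 0 ∧ (z - t) ^ ((p ^ n - 1) * m) = 1 := by
  classical
  set q := p ^ n
  have hq : 2 ≤ q := by have := Nat.le_of_dvd (Nat.succ_pos q) hm; omega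
  have hcard : Fintype.card F - 1 = (q - 1) * (q + 1) := by
    rw [hF, mul_comm, ← Nat.sq_sub_sq, one_pow]
  set K := nthRootsFinset (q - 1) (1 : F)
  have hK : ∀ t ∈ K, t ^ q = t ∧ t ≠ 0 := by
    intro t ht
    rw [mem_nthRootsFinset (by omega)] at ht
    refine ⟨?_, ?_⟩
    · rw [← Nat.sub_add_cancel (by omega : 1 ≤ q), pow_succ, ht, one_mul]
    · rintro rfl; simp [zero_pow (by omega : q - 1 ≠ 0)] at ht
  set f : F → F := fun t ↦ (z - t) ^ (q - 1)
  have hf : Set.InjOn f K := (injOn_sub_pow_sub_one hz).mono fun t ht ↦ (hK t ht).1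
  have hfU : K.image f ⊆ nthRootsFinset (q + 1) (1 : F) := by
    intro u hu
    obtain ⟨t, ht, rfl⟩ := mem_image.mp hu
    have hzt : z - t ≠ 0 := fun h ↦ hz (by rw [sub_eq_zero.mp h, (hK t ht).1])
    rw [mem_nthRootsFinset (by omega), ← pow_mul, ← hcard]
    exact FiniteField.pow_card_sub_one_eq_one _ hzt
  have hmU : nthRootsFinset m (1 : F) ⊆ nthRootsFinset (q + 1) (1 : F) := by
    intro u hu
    obtain ⟨k, hk⟩ := hm
    rw [mem_nthRootsFinset (by omega)] at hu ⊢
    rw [hk, pow_mul, hu, one_pow]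
  obtain ⟨u, hu⟩ := inter_nonempty_of_card_lt_card_add_card hfU hmU <| by
    rw [card_image_of_injOn hf,
      FiniteField.card_nthRootsFinset_one_of_dvd (d := q - 1) (hcard ▸ dvd_mul_right _ _),
      FiniteField.card_nthRootsFinset_one_of_dvd (d := m) (hcard ▸ hm.mul_left _)]
    exact (card_nthRootsFinset_le _ _).trans_lt (by omega)
  obtain ⟨hu, hum⟩ := mem_inter.mp hu
  obtain ⟨t, ht, rfl⟩ := mem_image.mp hu
  exact ⟨t, (hK t ht).1, (hK t ht).2, by rw [pow_mul, (mem_nthRootsFinset (by omega) 1).mp hum]⟩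

end Frobenius

theorem AddSubgroup.closure_eq_top_of_forall_add_mem {G : Type*} [AddGroup G] {C K : Set G}
    (hKC : ∀ t ∈ K, t ≠ 0 → t ∈ C) (hsplit : ∀ z ∉ K, ∃ t ∈ K, t ≠ 0 ∧ z + t ∈ C) :
    closure C = ⊤ := by
  refine eq_top_iff.mpr fun x _ ↦ ?_
  by_cases hx : x ∈ K
  · rcases eq_or_ne x 0 with rfl | hx0
    · exact zero_mem _
    · exact subset_closure (hKC x hx hx0)
  · obtain ⟨t, htK, ht0, hxt⟩ := hsplit x hx
    simpa using sub_mem (subset_closure hxt) (subset_closure (hKC t htK ht0))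

def SumAdj {R : Type*} [Add R] (C : Set R) (u v : R) : Prop :=
  u ∈ C ∧ v ∈ C ∧ u ≠ v ∧ u + v ∈ C

def nonzeroPowers (R : Type*) [MonoidWithZero R] (k : ℕ) : Set R :=
  {x | x ≠ 0 ∧ ∃ c, x = c ^ k}

section Field

variable {F : Type*} [Field F] {k : ℕ}

theorem mul_mem_nonzeroPowers {x y : F} (hx : x ∈ nonzeroPowers F k)
    (hy : y ∈ nonzeroPowers F k) : x * y ∈ nonzeroPowers F k := by
  obtain ⟨hx0, c, rfl⟩ := hx
  obtain ⟨hy0, d, rfl⟩ := hy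
  exact ⟨mul_ne_zero hx0 hy0, c * d, (mul_pow c d k).symm⟩

theorem div_mem_nonzeroPowers {x y : F} (hx : x ∈ nonzeroPowers F k)
    (hy : y ∈ nonzeroPowers F k) : x / y ∈ nonzeroPowers F k := by
  obtain ⟨hx0, c, rfl⟩ := hx
  obtain ⟨hy0, d, rfl⟩ := hy
  exact ⟨div_ne_zero hx0 hy0, c / d, (div_pow c d k).symm⟩

theorem SumAdj.mul_right_nonzeroPowers {u v c : F} (h : SumAdj (nonzeroPowers F k) u v)
    (hc : c ∈ nonzeroPowers F k) : SumAdj (nonzeroPowers F k) (u * c) (v * c) :=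
  ⟨mul_mem_nonzeroPowers h.1 hc, mul_mem_nonzeroPowers h.2.1 hc,
    fun huv ↦ h.2.2.1 (mul_right_cancel₀ hc.1 huv),
    add_mul u v c ▸ mul_mem_nonzeroPowers h.2.2.2 hc⟩

theorem reflTransGen_sumAdj_nonzeroPowers
    (h : ∀ x ∈ nonzeroPowers F k, ReflTransGen (SumAdj (nonzeroPowers F k)) x 1)
    {x y : F} (hx : x ∈ nonzeroPowers F k) (hy : y ∈ nonzeroPowers F k) :
    ReflTransGen (SumAdj (nonzeroPowers F k)) x y := by
  have := (h _ (div_mem_nonzeroPowers hx hy)).lift (· * y)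
    fun _ _ huv ↦ huv.mul_right_nonzeroPowers hy
  simpa only [Function.onFun, div_mul_cancel₀ x hy.1, one_mul] using this

end Field

theorem reflTransGen_sumAdj_one_of_subring {R : Type*} [Ring R] [Nontrivial R] [CharP R 2]
    {C : Set R} (K : Subring R) (hKC : ∀ t ∈ K, t ≠ 0 → t ∈ C)
    (hsplit : ∀ z ∈ C, z ∉ K → ∃ t ∈ K, t ≠ 0 ∧ z + t ∈ C) {x : R} (hx : x ∈ C) :
    ReflTransGen (SumAdj C) x 1 := by
  have hK (t : R) (ht : t ∈ K) (htC : t ∈ C) : ReflTransGen (SumAdj C) t 1 := by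
    rcases eq_or_ne t 1 with rfl | ht1
    · exact .refl
    · refine .single ⟨htC, hKC 1 K.one_mem one_ne_zero, ht1, ?_⟩
      exact hKC _ (K.add_mem ht K.one_mem) (mt CharTwo.add_eq_zero.mp ht1)
  by_cases hxK : x ∈ K
  · exact hK x hxK hx
  · obtain ⟨t, htK, ht0, hxt⟩ := hsplit x hx hxK
    have hxt' : x ≠ t := fun h ↦ hxK (h ▸ htK)
    exact .head ⟨hx, hKC t htK ht0, hxt', hxt⟩ (hK t htK (hKC t htK ht0))

theorem stmt7 {a : ℕ} (ha : 1 ≤ a) {F : Type*} [Field F] [Fintype F]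
    (hF : Fintype.card F = (2 ^ (2 * a + 1)) ^ 2)
    (C : Set F) (hC : C = {x : F | x ≠ 0 ∧ ∃ c : F, x = c ^ 3}) :
    (∀ x ∈ C, ∀ y ∈ C,
        Relation.ReflTransGen
          (fun u v : F => u ∈ C ∧ v ∈ C ∧ u ≠ v ∧ u + v ∈ C) x y) ∧
    AddSubgroup.closure C = ⊤ := by
  obtain rfl : C = nonzeroPowers F 3 := hC
  have : CharP F 2 := charP_of_card_eq_prime_pow (hF.trans (pow_mul _ _ _).symm)
  set q := 2 ^ (2 * a + 1)
  obtain ⟨m, hm⟩ : 3 ∣ q + 1 := by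
    simpa using (odd_two_mul_add_one a).nat_add_dvd_pow_add_pow 2 1
  have hq : 8 ≤ q := Nat.pow_le_pow_right two_pos (by omega : 3 ≤ 2 * a + 1)
  have hcube (w : F) (hw : w ^ ((q - 1) * m) = 1) : w ∈ nonzeroPowers F 3 := by
    refine ⟨fun hw0 ↦ ?_, FiniteField.exists_eq_pow_of_pow_eq_one ?_ hw⟩
    · simp [hw0, zero_pow (Nat.mul_ne_zero (by omega) (by omega) : (q - 1) * m ≠ 0)] at hw
    · rw [hF, ← one_pow 2, Nat.sq_sub_sq, one_pow, hm]; ring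
  let K := (iterateFrobenius F 2 (2 * a + 1)).eqLocus (RingHom.id F)
  have hKC : ∀ t ∈ K, t ≠ 0 → t ∈ nonzeroPowers F 3 := fun t (ht : t ^ q = t) ht0 ↦ by
    have ht1 : t ^ (q - 1) = 1 :=
      (mul_eq_right₀ ht0).mp (by rw [← pow_succ, Nat.sub_add_cancel (by omega : 1 ≤ q), ht])
    exact hcube t (by rw [pow_mul, ht1, one_pow])
  have hsplit (z : F) (hz : z ∉ K) : ∃ t ∈ K, t ≠ 0 ∧ z + t ∈ nonzeroPowers F 3 := by
    obtain ⟨t, ht, ht0, hzt⟩ :=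
      exists_pow_eq_self_and_sub_pow_eq_one hF (hm ▸ dvd_mul_left m 3) (by omega) hz
    exact ⟨t, ht, ht0, CharTwo.sub_eq_add z t ▸ hcube _ hzt⟩
  exact ⟨fun x hx y hy ↦ reflTransGen_sumAdj_nonzeroPowers
      (fun x hx ↦ reflTransGen_sumAdj_one_of_subring K hKC (fun z _ ↦ hsplit z) hx) hx hy,
    AddSubgroup.closure_eq_top_of_forall_add_mem hKC hsplit⟩
end

section
/- Let a ≥ 1 be an integer, let q = 2^{2a+1}, let F be a finite field of cardinality q², and let m = (q+1)/3 (note 3 divides q+1). If x ∈ F satisfies x^m = 1 and x ≠ 1, then 1 + x is a nonzero cube in F, i.e., 1 + x = c³ for some c ∈ Fˣ. -/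
/-!
Put `Q = p ^ n`, so that `|F| = Q ^ 2` and `|Fˣ| = (Q - 1)(Q + 1)`. If `d ∣ Q + 1` and
`x ^ ((Q + 1) / d) = 1`, then `x ^ Q = x⁻¹`, so the Frobenius gives
`(1 + x) ^ Q = 1 + x⁻¹ = (1 + x) / x`, i.e. `(1 + x) ^ (Q - 1) = x⁻¹`. Raising to the power
`(Q + 1) / d` shows that `1 + x` lies in the kernel of `y ↦ y ^ (|Fˣ| / d)`, which in the cyclic
group `Fˣ` is exactly the subgroup of `d`-th powers. For `Q = 2 ^ (2a + 1)` we have `3 ∣ Q + 1`,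
and in characteristic `2` the condition `x ≠ 1` means `1 + x ≠ 0`.
-/

theorem IsCyclic.exists_pow_eq_of_pow_eq_one {G : Type*} [CommGroup G] [IsCyclic G] [Finite G]
    {d n : ℕ} (hG : Nat.card G = d * n) {y : G} (hy : y ^ n = 1) : ∃ z : G, z ^ d = y := by
  have hd : d ≠ 0 := left_ne_zero_of_mul (hG ▸ Nat.card_pos.ne')
  have hle : (powMonoidHom d : G →* G).range ≤ (powMonoidHom n).ker := by
    rintro _ ⟨z, rfl⟩
    simp only [MonoidHom.mem_ker, powMonoidHom_apply, ← pow_mul, ← hG, pow_card_eq_one']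
  have heq := Subgroup.eq_of_le_of_card_ge hle <| by
    rw [IsCyclic.card_powMonoidHom_range, IsCyclic.card_powMonoidHom_ker, hG,
      Nat.gcd_mul_left_left, Nat.gcd_mul_right_left, Nat.mul_div_cancel_left _ hd.bot_lt]
  obtain ⟨z, hz⟩ : y ∈ (powMonoidHom d : G →* G).range := heq ▸ hy
  exact ⟨z, hz⟩

theorem one_add_pow_sub_one_mul_self {F : Type*} [Field F] (p n : ℕ) [ExpChar F p] {x : F}
    (hx : x ^ (p ^ n + 1) = 1) (hx1 : 1 + x ≠ 0) : (1 + x) ^ (p ^ n - 1) * x = 1 := by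
  have hpos : 0 < p ^ n := pow_pos (expChar_pos F p) n
  apply mul_right_cancel₀ hx1
  calc (1 + x) ^ (p ^ n - 1) * x * (1 + x) = (1 + x) ^ (p ^ n - 1 + 1) * x := by ring
    _ = (1 + x ^ p ^ n) * x := by rw [Nat.sub_add_cancel hpos, add_pow_expChar_pow, one_pow]
    _ = x + x ^ (p ^ n + 1) := by ring
    _ = 1 * (1 + x) := by rw [hx]; ring

theorem exists_pow_eq_one_add_of_pow_eq_one {F : Type*} [Field F] [Fintype F] (p n : ℕ)
    [ExpChar F p] (hF : Fintype.card F = (p ^ n) ^ 2) {d : ℕ} (hd : d ∣ p ^ n + 1) {x : F}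
    (hx : x ^ ((p ^ n + 1) / d) = 1) (hx1 : 1 + x ≠ 0) : ∃ c : F, c ≠ 0 ∧ 1 + x = c ^ d := by
  classical
  set Q := p ^ n
  have hxQ : x ^ (Q + 1) = 1 := by
    rw [← Nat.div_mul_cancel hd, pow_mul, hx, one_pow]
  have hfrob : (1 + x) ^ (Q - 1) * x = 1 := one_add_pow_sub_one_mul_self p n hxQ hx1
  set u : Fˣ := Units.mk0 (1 + x) hx1
  have hu : u ^ ((Q - 1) * ((Q + 1) / d)) = 1 := by
    ext
    rw [Units.val_pow_eq_pow_val, pow_mul, Units.val_mk0,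
      eq_inv_of_mul_eq_one_left hfrob, inv_pow, hx, inv_one, Units.val_one]
  have hcard : Nat.card Fˣ = d * ((Q - 1) * ((Q + 1) / d)) := by
    rw [Nat.card_eq_fintype_card, Fintype.card_units, hF, mul_left_comm, Nat.mul_div_cancel' hd,
      mul_comm]
    simpa using Nat.sq_sub_sq Q 1
  obtain ⟨c, hc⟩ := IsCyclic.exists_pow_eq_of_pow_eq_one hcard hu
  exact ⟨c, c.ne_zero, by rw [← Units.val_pow_eq_pow_val, hc, Units.val_mk0]⟩

theorem stmt8_general {a : ℕ} (q : ℕ) (hq : q = 2 ^ (2 * a + 1))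
    {F : Type*} [Field F] [Fintype F] (hF : Fintype.card F = q ^ 2)
    (m : ℕ) (hm : m = (q + 1) / 3)
    (x : F) (hx : x ^ m = 1) (hx1 : x ≠ 1) :
    ∃ c : F, c ≠ 0 ∧ 1 + x = c ^ 3 := by
  subst hq hm
  have : CharP F 2 := ringChar.of_eq <| FiniteField.even_card_iff_char_two.mpr <| by
    rw [hF, ← pow_mul, Nat.pow_mod]
    simp
  have hd : 3 ∣ 2 ^ (2 * a + 1) + 1 := by
    simpa using Odd.nat_add_dvd_pow_add_pow 2 1 (odd_two_mul_add_one a)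
  refine exists_pow_eq_one_add_of_pow_eq_one 2 (2 * a + 1) hF hd hx fun h ↦ hx1 ?_
  rw [← CharTwo.neg_eq x]
  exact neg_eq_of_add_eq_zero_left h

theorem stmt8 {a : ℕ} (ha : 1 ≤ a) (q : ℕ) (hq : q = 2 ^ (2 * a + 1))
    {F : Type*} [Field F] [Fintype F] (hF : Fintype.card F = q ^ 2)
    (m : ℕ) (hm : m = (q + 1) / 3)
    (x : F) (hx : x ^ m = 1) (hx1 : x ≠ 1) :
    ∃ c : F, c ≠ 0 ∧ 1 + x = c ^ 3 :=
  stmt8_general q hq hF m hm x hx hx1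
end

section
/- Let G be a finite group with a normal subgroup N and a subgroup T such that N ∩ T = {1} and NT = G (so G = N ⋊ T). Let K be a normal subgroup of G with K ⊆ N, and set A = N \ K. Let T₀ be a subgroup of T, and assume: (i) for every t ∈ T with t ≠ 1 and every a ∈ A, t⁻¹at ≠ a (T acts freely on A by conjugation); (ii) every element of T₀ commutes with every element of K; (iii) for all t ∈ T and k ∈ K with k ≠ 1, if t⁻¹kt = k then t ∈ T₀ (the conjugation action of T on K \ {1} factors through a free action of T/T₀); (iv) the index |N : K| > 1 and |T₀| > 1. If the action of G on the set of right cosets of T by right multiplication is binary, then T₀ = T; moreover, if |N : K| > 2 then |T| ≤ 1 + 2|K|. -/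
open scoped Pointwise MatrixGroups

/-!
Identify the right cosets of `T` with `N` via `Tx ↔ x`, so that `t ∈ T` acts by conjugation
`x ↦ xᵗ = t⁻¹xt`. Suppose `x⁻¹xˢ = z⁻¹zᵛ` with `x ∈ N \ K`, `s, v ∈ T`. Then the triples
`(1, x⁻¹, zx⁻¹)` and `(1, (x⁻¹)ˢ, zx⁻¹)` are 2-related, so a single `g ∈ T` carries one to the
other; as `T` acts freely on `N \ K`, `g = s`, hence `s` fixes `zx⁻¹`, and if `s ≠ 1` this forces
`zx⁻¹ ∈ K`. So, for fixed coset representatives `x`, the map `(xK, s) ↦ x⁻¹xˢ` is injective on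
`(N/K \ 1) × (T \ 1)` with values in `N \ 1`, and `(|N:K| - 1)(|T| - 1) ≤ |K||N:K| - 1`
bounds `|T|`.

If `v ∉ T₀`, then `k ↦ k⁻¹kᵛ` is a bijection of `K`, so `z` can be moved inside `zK` to turn a
congruence `x⁻¹xˢ ≡ z⁻¹zᵛ (mod K)` into an equality. Hence, if `T₀ ≠ T`, the map
`(xK, s) ↦ x⁻¹xˢK` is injective on `(N/K \ 1) × (T \ T₀)` with values in `N/K \ 1`, which is
impossible since `|T \ T₀| ≥ |T₀| ≥ 2`.
-/

open QuotientGroup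

section CosetAction

variable {G : Type*} [Group G] {H : Subgroup G}

@[simp]
lemma rightCosetMul_mk (g x : G) :
    rightCosetMul H g (Quotient.mk _ x) = Quotient.mk _ (x * g) :=
  rfl

lemma mk_eq_mk_iff_mul_inv_mem {x y : G} :
    (Quotient.mk (rightRel H) x = Quotient.mk _ y) ↔ y * x⁻¹ ∈ H :=
  Quotient.eq.trans rightRel_apply

lemma mem_of_rightCosetMul_mk_one {g : G}
    (h : rightCosetMul H g (Quotient.mk _ 1) = Quotient.mk _ 1) : g ∈ H := by
  simpa using inv_mem (mk_eq_mk_iff_mul_inv_mem.mp h)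

lemma exists_rightCosetMul_eq_pair {v : G} (hv : v ∈ H) {x y x' y' : G}
    (h : y' * x'⁻¹ = v⁻¹ * (y * x⁻¹) * v) :
    ∃ g, rightCosetMul H g (Quotient.mk _ x) = Quotient.mk _ x' ∧
      rightCosetMul H g (Quotient.mk _ y) = Quotient.mk _ y' := by
  refine ⟨x⁻¹ * v * x', ?_, ?_⟩ <;> rw [rightCosetMul_mk, mk_eq_mk_iff_mul_inv_mem]
  · simpa [mul_assoc] using inv_mem hv
  · have hy' : y' = v⁻¹ * (y * x⁻¹) * v * x' := by rw [← h]; group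
    have : y' * (y * (x⁻¹ * v * x'))⁻¹ = v⁻¹ := by rw [hy']; group
    rw [this]
    exact inv_mem hv

lemma IsBinaryCosetAction.exists_rightCosetMul_eq_triple (hbin : IsBinaryCosetAction H)
    {a b c a' b' c' : Quotient (rightRel H)}
    (hab : ∃ g, rightCosetMul H g a = a' ∧ rightCosetMul H g b = b')
    (hac : ∃ g, rightCosetMul H g a = a' ∧ rightCosetMul H g c = c')
    (hbc : ∃ g, rightCosetMul H g b = b' ∧ rightCosetMul H g c = c') :
    ∃ g, rightCosetMul H g a = a' ∧ rightCosetMul H g b = b' ∧ rightCosetMul H g c = c' := by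
  obtain ⟨g₁, hg₁a, hg₁b⟩ := hab
  obtain ⟨g₂, hg₂a, hg₂c⟩ := hac
  obtain ⟨g₃, hg₃b, hg₃c⟩ := hbc
  obtain ⟨g, hg⟩ := hbin 3 ![a, b, c] ![a', b', c'] fun i j => by
    fin_cases i <;> fin_cases j <;>
      first
      | exact ⟨g₁, by assumption, by assumption⟩
      | exact ⟨g₂, by assumption, by assumption⟩
      | exact ⟨g₃, by assumption, by assumption⟩
  exact ⟨g, hg 0, hg 1, hg 2⟩

end CosetAction

section SemidirectProduct

variable {G : Type*} [Group G] {N T K : Subgroup G}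

lemma eq_conj_of_rightCosetMul_mk_eq [N.Normal] (hNT : N ⊓ T = ⊥) {g x y : G} (hg : g ∈ T)
    (hx : x ∈ N) (hy : y ∈ N) (h : rightCosetMul T g (Quotient.mk _ x) = Quotient.mk _ y) :
    y = g⁻¹ * x * g := by
  rw [rightCosetMul_mk, mk_eq_mk_iff_mul_inv_mem] at h
  have hmemN : y * (g⁻¹ * x * g)⁻¹ ∈ N :=
    mul_mem hy (inv_mem (by simpa using Subgroup.Normal.conj_mem ‹_› x hx g⁻¹))
  have hmemT : y * (g⁻¹ * x * g)⁻¹ ∈ T := by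
    simpa [mul_assoc] using mul_mem h hg
  have := Subgroup.disjoint_def.mp (disjoint_iff.mpr hNT) hmemN hmemT
  exact mul_inv_eq_one.mp this

lemma eq_of_conj_eq
    (hfree : ∀ t ∈ T, t ≠ 1 → ∀ a : G, a ∈ N → a ∉ K → t⁻¹ * a * t ≠ a)
    {x s v : G} (hx : x ∈ N) (hxK : x ∉ K) (hs : s ∈ T) (hv : v ∈ T)
    (h : s⁻¹ * x * s = v⁻¹ * x * v) : s = v := by
  by_contra hne
  refine hfree (s * v⁻¹) (mul_mem hs (inv_mem hv)) (mul_inv_eq_one.not.mpr hne) x hx hxK ?_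
  calc (s * v⁻¹)⁻¹ * x * (s * v⁻¹) = v * (s⁻¹ * x * s) * v⁻¹ := by group
    _ = x := by rw [h]; group

lemma conj_mul_inv_eq_of_inv_mul_conj_eq [N.Normal] (hNT : N ⊓ T = ⊥)
    (hfree : ∀ t ∈ T, t ≠ 1 → ∀ a : G, a ∈ N → a ∉ K → t⁻¹ * a * t ≠ a)
    (hbin : IsBinaryCosetAction T) {x z s v : G} (hx : x ∈ N) (hxK : x ∉ K) (hz : z ∈ N)
    (hs : s ∈ T) (hv : v ∈ T) (h : x⁻¹ * (s⁻¹ * x * s) = z⁻¹ * (v⁻¹ * z * v)) :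
    s⁻¹ * (z * x⁻¹) * s = z * x⁻¹ := by
  have hx' : x⁻¹ ∈ N := inv_mem hx
  have hxK' : x⁻¹ ∉ K := fun h => hxK (by simpa using inv_mem h)
  have hzx : z * x⁻¹ ∈ N := mul_mem hz hx'
  obtain ⟨g, hg1, hgx, hgzx⟩ := hbin.exists_rightCosetMul_eq_triple
    (a := Quotient.mk _ 1) (b := Quotient.mk _ x⁻¹) (c := Quotient.mk _ (z * x⁻¹))
    (a' := Quotient.mk _ 1) (b' := Quotient.mk _ (s⁻¹ * x⁻¹ * s))
    (c' := Quotient.mk _ (z * x⁻¹))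
    (exists_rightCosetMul_eq_pair hs (by group))
    (exists_rightCosetMul_eq_pair (one_mem T) (by group))
    (exists_rightCosetMul_eq_pair hv (calc
      z * x⁻¹ * (s⁻¹ * x⁻¹ * s)⁻¹ = z * (x⁻¹ * (s⁻¹ * x * s)) := by group
      _ = v⁻¹ * (z * x⁻¹ * x⁻¹⁻¹) * v := by rw [h]; group))
  have hgT : g ∈ T := mem_of_rightCosetMul_mk_one hg1
  have hgs : g = s := eq_of_conj_eq hfree hx' hxK' hgT hs
    (eq_conj_of_rightCosetMul_mk_eq hNT hgT hx' (Subgroup.Normal.conj_mem' ‹_› _ hx' s) hgx).symm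
  rw [← hgs]
  exact (eq_conj_of_rightCosetMul_mk_eq hNT hgT hzx hzx hgzx).symm

lemma mul_inv_mem_of_inv_mul_conj_eq [N.Normal] (hNT : N ⊓ T = ⊥)
    (hfree : ∀ t ∈ T, t ≠ 1 → ∀ a : G, a ∈ N → a ∉ K → t⁻¹ * a * t ≠ a)
    (hbin : IsBinaryCosetAction T) {x z s v : G} (hx : x ∈ N) (hxK : x ∉ K) (hz : z ∈ N)
    (hs : s ∈ T) (hs1 : s ≠ 1) (hv : v ∈ T) (h : x⁻¹ * (s⁻¹ * x * s) = z⁻¹ * (v⁻¹ * z * v)) :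
    z * x⁻¹ ∈ K := by
  by_contra hzx
  exact hfree s hs hs1 _ (mul_mem hz (inv_mem hx)) hzx
    (conj_mul_inv_eq_of_inv_mul_conj_eq hNT hfree hbin hx hxK hz hs hv h)

lemma eq_one_of_conj_eq_self {T₀ : Subgroup G}
    (hfix : ∀ t ∈ T, ∀ k ∈ K, k ≠ 1 → t⁻¹ * k * t = k → t ∈ T₀) {v : G} (hv : v ∈ T)
    (hv₀ : v ∉ T₀) : ∀ k ∈ K, v⁻¹ * k * v = k → k = 1 :=
  fun k hk hkv => by_contra fun hk1 => hv₀ (hfix v hv k hk hk1 hkv)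

lemma exists_inv_mul_conj_eq [K.Normal] [Finite K] {v : G}
    (hv : ∀ k ∈ K, v⁻¹ * k * v = k → k = 1) {c : G} (hc : c ∈ K) :
    ∃ k ∈ K, k⁻¹ * (v⁻¹ * k * v) = c := by
  let ψ : K → K := fun k =>
    ⟨(k : G)⁻¹ * (v⁻¹ * k * v), mul_mem (inv_mem k.2) (Subgroup.Normal.conj_mem' ‹_› _ k.2 v)⟩
  have hψ : Function.Injective ψ := by
    intro k l hkl
    have hkl : (k : G)⁻¹ * (v⁻¹ * k * v) = (l : G)⁻¹ * (v⁻¹ * l * v) := congrArg Subtype.val hkl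
    have hfix : v⁻¹ * ((l : G) * (k : G)⁻¹) * v = l * (k : G)⁻¹ :=
      calc v⁻¹ * ((l : G) * (k : G)⁻¹) * v
          = l * ((l : G)⁻¹ * (v⁻¹ * l * v)) * ((k : G)⁻¹ * (v⁻¹ * k * v))⁻¹ * (k : G)⁻¹ := by
            group
        _ = l * (k : G)⁻¹ := by rw [hkl]; group
    exact (Subtype.ext (mul_inv_eq_one.mp (hv _ (mul_mem l.2 (inv_mem k.2)) hfix))).symm
  obtain ⟨k, hk⟩ := Finite.injective_iff_surjective.mp hψ ⟨c, hc⟩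
  exact ⟨k, k.2, congrArg Subtype.val hk⟩

lemma mul_inv_mem_of_mk_inv_mul_conj_eq [N.Normal] [K.Normal] [Finite K] (hNT : N ⊓ T = ⊥)
    (hfree : ∀ t ∈ T, t ≠ 1 → ∀ a : G, a ∈ N → a ∉ K → t⁻¹ * a * t ≠ a)
    (hbin : IsBinaryCosetAction T) (hKN : K ≤ N) {x z s v : G} (hx : x ∈ N) (hxK : x ∉ K)
    (hz : z ∈ N) (hs : s ∈ T) (hs1 : s ≠ 1) (hv : v ∈ T)
    (hvK : ∀ k ∈ K, v⁻¹ * k * v = k → k = 1)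
    (h : ((x⁻¹ * (s⁻¹ * x * s) : G) : G ⧸ K) = ((z⁻¹ * (v⁻¹ * z * v) : G) : G ⧸ K)) :
    z * x⁻¹ ∈ K := by
  set a := x⁻¹ * (s⁻¹ * x * s)
  set b := z⁻¹ * (v⁻¹ * z * v)
  have hc : z * (a * b⁻¹) * z⁻¹ ∈ K :=
    Subgroup.Normal.conj_mem ‹_› _ (by simpa [div_eq_mul_inv] using eq_iff_div_mem.mp h) z
  obtain ⟨k, hk, hkc⟩ := exists_inv_mul_conj_eq hvK hc
  have hkz : x⁻¹ * (s⁻¹ * x * s) = (k * z)⁻¹ * (v⁻¹ * (k * z) * v) :=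
    calc a = z⁻¹ * (z * (a * b⁻¹) * z⁻¹) * (v⁻¹ * z * v) := by simp only [b]; group
      _ = (k * z)⁻¹ * (v⁻¹ * (k * z) * v) := by rw [← hkc]; group
  have := mul_inv_mem_of_inv_mul_conj_eq hNT hfree hbin hx hxK (mul_mem (hKN hk) hz) hs hs1 hv hkz
  simpa [mul_assoc] using mul_mem (inv_mem hk) this

lemma eq_of_mk_conj_eq [N.Normal] [K.Normal] [Finite K] (hNT : N ⊓ T = ⊥)
    (hfree : ∀ t ∈ T, t ≠ 1 → ∀ a : G, a ∈ N → a ∉ K → t⁻¹ * a * t ≠ a)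
    (hbin : IsBinaryCosetAction T) (hKN : K ≤ N) {x s v w : G} (hx : x ∈ N) (hxK : x ∉ K)
    (hs : s ∈ T) (hv : v ∈ T) (hw : w ∈ T) (hwK : ∀ k ∈ K, w⁻¹ * k * w = k → k = 1)
    (h : ((s⁻¹ * x * s : G) : G ⧸ K) = ((v⁻¹ * x * v : G) : G ⧸ K)) : s = v := by
  by_contra hne
  set y := v⁻¹ * x * v
  have hyK : y ∉ K := fun hy => hxK <| by
    simpa [y, mul_assoc] using Subgroup.Normal.conj_mem ‹K.Normal› _ hy v
  have hdisp : ((y⁻¹ * ((v⁻¹ * s)⁻¹ * y * (v⁻¹ * s)) : G) : G ⧸ K) =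
      ((1⁻¹ * (w⁻¹ * 1 * w) : G) : G ⧸ K) := by
    have : y⁻¹ * ((v⁻¹ * s)⁻¹ * y * (v⁻¹ * s)) = y⁻¹ * (s⁻¹ * x * s) := by simp only [y]; group
    rw [this, mk_mul, mk_inv, h]
    simp
  have := mul_inv_mem_of_mk_inv_mul_conj_eq hNT hfree hbin hKN
    (Subgroup.Normal.conj_mem' ‹_› _ hx v) hyK (one_mem N) (mul_mem (inv_mem hv) hs)
    (fun h1 => hne (inv_mul_eq_one.mp h1).symm) hw hwK hdisp
  exact hyK (by simpa using inv_mem this)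

end SemidirectProduct

lemma le_one_add_two_mul_of_mul_le {m k t : ℕ} (hm : 2 ≤ m)
    (h : (m - 1) * (t - 1) ≤ k * m - 1) : t ≤ 1 + 2 * k := by
  obtain ⟨m, rfl⟩ := Nat.exists_eq_add_of_le' hm
  rw [show m + 2 - 1 = m + 1 by omega] at h
  by_contra! ht
  have h₁ : (m + 1) * (2 * k + 1) ≤ (m + 1) * (t - 1) := Nat.mul_le_mul_left _ (by omega)
  have h₂ : k * (m + 2) ≤ (m + 1) * (2 * k + 1) := by nlinarith
  have h₃ : 0 < (m + 1) * (2 * k + 1) := by positivity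
  omega

section Counting

variable {G : Type*} [Group G] {N T K : Subgroup G}

lemma ncard_map_mk_sdiff_one [Finite G] [K.Normal] :
    ((N.map (mk' K) : Set (G ⧸ K)) \ {1}).ncard = K.relIndex N - 1 := by
  have := Subgroup.relIndex_ker (K := N) (mk' K)
  rw [ker_mk'] at this
  rw [Set.ncard_sdiff_singleton_of_mem (one_mem (N.map (mk' K))), this]
  rfl

lemma out_mem_and_notMem [K.Normal] (hKN : K ≤ N) {q : G ⧸ K}
    (hq : q ∈ (N.map (mk' K) : Set (G ⧸ K)) \ {1}) : q.out ∈ N ∧ q.out ∉ K := by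
  obtain ⟨⟨x, hx, rfl⟩, hq1⟩ := hq
  refine ⟨?_, fun hK => hq1 ?_⟩
  · have : x⁻¹ * (x : G ⧸ K).out ∈ K := QuotientGroup.eq.mp (out_eq' _).symm
    simpa using mul_mem hx (hKN this)
  · rw [← out_eq' (mk' K x)]
    exact (eq_one_iff _).mpr hK

lemma injOn_out_inv_mul_conj [N.Normal] [K.Normal] (hNT : N ⊓ T = ⊥)
    (hfree : ∀ t ∈ T, t ≠ 1 → ∀ a : G, a ∈ N → a ∉ K → t⁻¹ * a * t ≠ a)
    (hbin : IsBinaryCosetAction T) (hKN : K ≤ N) :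
    Set.InjOn (fun p : (G ⧸ K) × G => p.1.out⁻¹ * (p.2⁻¹ * p.1.out * p.2))
      (((N.map (mk' K) : Set (G ⧸ K)) \ {1}) ×ˢ ((T : Set G) \ {1})) := by
  rintro ⟨q, s⟩ ⟨hq, hsT, hs1⟩ ⟨p, v⟩ ⟨hp, hvT, -⟩ h
  obtain ⟨hx, hxK⟩ := out_mem_and_notMem hKN hq
  have hpq : p = q := by
    rw [← out_eq' p, ← out_eq' q, eq_iff_div_mem, div_eq_mul_inv]
    exact mul_inv_mem_of_inv_mul_conj_eq hNT hfree hbin hx hxK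
      (out_mem_and_notMem hKN hp).1 hsT hs1 hvT h
  subst hpq
  exact Prod.ext rfl (eq_of_conj_eq hfree hx hxK hsT hvT (mul_left_cancel h))

lemma injOn_mk_out_inv_mul_conj [Finite G] [N.Normal] [K.Normal] {T₀ : Subgroup G}
    (hNT : N ⊓ T = ⊥)
    (hfree : ∀ t ∈ T, t ≠ 1 → ∀ a : G, a ∈ N → a ∉ K → t⁻¹ * a * t ≠ a)
    (hfix : ∀ t ∈ T, ∀ k ∈ K, k ≠ 1 → t⁻¹ * k * t = k → t ∈ T₀)
    (hbin : IsBinaryCosetAction T) (hKN : K ≤ N) :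
    Set.InjOn (fun p : (G ⧸ K) × G => ((p.1.out⁻¹ * (p.2⁻¹ * p.1.out * p.2) : G) : G ⧸ K))
      (((N.map (mk' K) : Set (G ⧸ K)) \ {1}) ×ˢ ((T : Set G) \ T₀)) := by
  rintro ⟨q, s⟩ ⟨hq, hsT, hsT₀⟩ ⟨p, v⟩ ⟨hp, hvT, hvT₀⟩ h
  obtain ⟨hx, hxK⟩ := out_mem_and_notMem hKN hq
  have hvK := eq_one_of_conj_eq_self hfix hvT hvT₀
  have hpq : p = q := by
    rw [← out_eq' p, ← out_eq' q, eq_iff_div_mem, div_eq_mul_inv]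
    exact mul_inv_mem_of_mk_inv_mul_conj_eq hNT hfree hbin hKN hx hxK
      (out_mem_and_notMem hKN hp).1 hsT (fun hs1 => hsT₀ (hs1 ▸ one_mem T₀)) hvT hvK h
  subst hpq
  simp only [mk_mul, mk_inv, mul_right_inj] at h
  exact Prod.ext rfl (eq_of_mk_conj_eq hNT hfree hbin hKN hx hxK hsT hvT hvT hvK (by
    simpa only [mk_mul, mk_inv] using h))

lemma card_eq_card_mul_relIndex {H H' : Subgroup G} (h : H ≤ H') :
    Nat.card H' = Nat.card H * H.relIndex H' := by
  rw [← Subgroup.relIndex_bot_left, ← Subgroup.relIndex_bot_left]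
  exact (Subgroup.relIndex_mul_relIndex _ _ _ bot_le h).symm

theorem card_le_one_add_two_mul_card [Finite G] [N.Normal] [K.Normal] (hNT : N ⊓ T = ⊥)
    (hfree : ∀ t ∈ T, t ≠ 1 → ∀ a : G, a ∈ N → a ∉ K → t⁻¹ * a * t ≠ a)
    (hbin : IsBinaryCosetAction T) (hKN : K ≤ N) (hNK : 1 < K.relIndex N) :
    Nat.card T ≤ 1 + 2 * Nat.card K := by
  have hmaps : ∀ p ∈ ((N.map (mk' K) : Set (G ⧸ K)) \ {1}) ×ˢ ((T : Set G) \ {1}),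
      p.1.out⁻¹ * (p.2⁻¹ * p.1.out * p.2) ∈ (N : Set G) \ {1} := by
    rintro ⟨q, s⟩ ⟨hq, hsT, hs1⟩
    obtain ⟨hx, hxK⟩ := out_mem_and_notMem hKN hq
    refine ⟨mul_mem (inv_mem hx) (Subgroup.Normal.conj_mem' ‹_› _ hx s), fun h => ?_⟩
    exact hfree s hsT hs1 _ hx hxK (inv_mul_eq_one.mp h).symm
  have hcount := Set.ncard_le_ncard_of_injOn _ hmaps (injOn_out_inv_mul_conj hNT hfree hbin hKN)
  rw [Set.ncard_prod, ncard_map_mk_sdiff_one, Set.ncard_sdiff_singleton_of_mem (one_mem T),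
    Set.ncard_sdiff_singleton_of_mem (one_mem N)] at hcount
  refine le_one_add_two_mul_of_mul_le hNK ?_
  rw [← card_eq_card_mul_relIndex hKN]
  exact hcount

lemma mapsTo_mk_out_inv_mul_conj [Finite G] [N.Normal] [K.Normal] {T₀ : Subgroup G}
    (hNT : N ⊓ T = ⊥)
    (hfree : ∀ t ∈ T, t ≠ 1 → ∀ a : G, a ∈ N → a ∉ K → t⁻¹ * a * t ≠ a)
    (hfix : ∀ t ∈ T, ∀ k ∈ K, k ≠ 1 → t⁻¹ * k * t = k → t ∈ T₀)
    (hbin : IsBinaryCosetAction T) (hKN : K ≤ N) :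
    Set.MapsTo (fun p : (G ⧸ K) × G => ((p.1.out⁻¹ * (p.2⁻¹ * p.1.out * p.2) : G) : G ⧸ K))
      (((N.map (mk' K) : Set (G ⧸ K)) \ {1}) ×ˢ ((T : Set G) \ T₀))
      ((N.map (mk' K) : Set (G ⧸ K)) \ {1}) := by
  rintro ⟨q, s⟩ ⟨hq, hsT, hsT₀⟩
  obtain ⟨hx, hxK⟩ := out_mem_and_notMem hKN hq
  refine ⟨Subgroup.mem_map_of_mem _ (mul_mem (inv_mem hx) (Subgroup.Normal.conj_mem' ‹_› _ hx s)),
    fun h => hsT₀ ?_⟩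
  have h : ((q.out⁻¹ * (s⁻¹ * q.out * s) : G) : G ⧸ K) = 1 := h
  have : ((s⁻¹ * q.out * s : G) : G ⧸ K) = ((1⁻¹ * q.out * 1 : G) : G ⧸ K) := by
    rw [mk_mul, mk_inv, inv_mul_eq_one] at h
    simpa using h.symm
  rw [eq_of_mk_conj_eq hNT hfree hbin hKN hx hxK hsT (one_mem T) hsT
    (eq_one_of_conj_eq_self hfix hsT hsT₀) this]
  exact one_mem T₀

theorem eq_of_isBinaryCosetAction [Finite G] [N.Normal] [K.Normal] {T₀ : Subgroup G}
    (hNT : N ⊓ T = ⊥)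
    (hfree : ∀ t ∈ T, t ≠ 1 → ∀ a : G, a ∈ N → a ∉ K → t⁻¹ * a * t ≠ a)
    (hfix : ∀ t ∈ T, ∀ k ∈ K, k ≠ 1 → t⁻¹ * k * t = k → t ∈ T₀)
    (hbin : IsBinaryCosetAction T) (hKN : K ≤ N) (hT₀T : T₀ ≤ T) (hNK : 1 < K.relIndex N)
    (hT₀ : 1 < Nat.card T₀) : T₀ = T := by
  by_contra hne
  have hcount := Set.ncard_le_ncard_of_injOn _
    (mapsTo_mk_out_inv_mul_conj hNT hfree hfix hbin hKN)
    (injOn_mk_out_inv_mul_conj hNT hfree hfix hbin hKN)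
  rw [Set.ncard_prod, ncard_map_mk_sdiff_one, Set.ncard_sdiff hT₀T] at hcount
  have hT := card_eq_card_mul_relIndex hT₀T
  have hr : 2 ≤ T₀.relIndex T := by
    have h1 : T₀.relIndex T ≠ 1 := fun h => hne (le_antisymm hT₀T (Subgroup.relIndex_eq_one.mp h))
    have h0 : T₀.relIndex T ≠ 0 := fun h => Nat.card_pos.ne' (by rw [hT, h, mul_zero])
    omega
  have : Nat.card T₀ * 2 ≤ Nat.card T := hT ▸ Nat.mul_le_mul_left _ hr
  have : Nat.card T - Nat.card T₀ ≤ 1 :=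
    Nat.le_of_mul_le_mul_left (c := K.relIndex N - 1) (b := 1) (by rw [mul_one]; exact hcount)
      (by omega)
  omega

end Counting

theorem stmt9_general {G : Type*} [Group G] [Finite G] (N T K T₀ : Subgroup G)
    [N.Normal] [K.Normal]
    (hNT : N ⊓ T = ⊥)
    (hKN : K ≤ N) (hT₀T : T₀ ≤ T)
    (hfree : ∀ t ∈ T, t ≠ 1 → ∀ a : G, a ∈ N → a ∉ K → t⁻¹ * a * t ≠ a)
    (hfix : ∀ t ∈ T, ∀ k ∈ K, k ≠ 1 → t⁻¹ * k * t = k → t ∈ T₀)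
    (hNK : 1 < K.relIndex N) (hT₀ : 1 < Nat.card T₀)
    (hbin : IsBinaryCosetAction T) :
    T₀ = T ∧ (2 < K.relIndex N → Nat.card T ≤ 1 + 2 * Nat.card K) :=
  ⟨eq_of_isBinaryCosetAction hNT hfree hfix hbin hKN hT₀T hNK hT₀,
    fun _ => card_le_one_add_two_mul_card hNT hfree hbin hKN hNK⟩

theorem stmt9 {G : Type*} [Group G] [Finite G] (N T K T₀ : Subgroup G)
    [N.Normal] [K.Normal]
    (hNT : N ⊓ T = ⊥) (hNTall : (N : Set G) * (T : Set G) = Set.univ)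
    (hKN : K ≤ N) (hT₀T : T₀ ≤ T)
    (hfree : ∀ t ∈ T, t ≠ 1 → ∀ a : G, a ∈ N → a ∉ K → t⁻¹ * a * t ≠ a)
    (hcomm : ∀ t ∈ T₀, ∀ k ∈ K, t * k = k * t)
    (hfix : ∀ t ∈ T, ∀ k ∈ K, k ≠ 1 → t⁻¹ * k * t = k → t ∈ T₀)
    (hNK : 1 < K.relIndex N) (hT₀ : 1 < Nat.card T₀)
    (hbin : IsBinaryCosetAction T) :
    T₀ = T ∧ (2 < K.relIndex N → Nat.card T ≤ 1 + 2 * Nat.card K) :=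
  stmt9_general N T K T₀ hNT hKN hT₀T hfree hfix hNK hT₀ hbin
end

section
/- Let F be a finite field of characteristic different from 3, and let G = PSL₂(F). Then any two elements of order 3 in G are conjugate in G. -/
/-!
An element of order 3 of `PSL(2, F)` lifts to a non-central `A ∈ SL(2, F)` with `A ^ 3 = 1`
(replace `A` by `-A` if `A ^ 3 = -1`). By Cayley–Hamilton `A ^ 3 = (t ^ 2 - 1) A - t` with
`t = tr A`, so `t = -1`, and a non-scalar matrix is conjugate in `GL(2, F)` to the companion
matrix `C` of its characteristic polynomial, here `X ^ 2 + X + 1`. The centralizer of `C`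
contains every `α + β C`, whose determinant `α ^ 2 - α β + β ^ 2` takes all values in `F` when
`char F ≠ 3`; multiplying by a suitable one turns the conjugating matrix into an element of
`SL(2, F)`.
-/

open scoped Pointwise MatrixGroups

open Polynomial in
theorem FiniteField.exists_sq_sub_mul_add_sq_eq {F : Type*} [Field F] [Fintype F]
    (hchar : ringChar F ≠ 3) (d : F) : ∃ a b : F, a ^ 2 - a * b + b ^ 2 = d := by
  by_cases h2 : ringChar F = 2
  · obtain ⟨a, rfl⟩ := FiniteField.isSquare_of_char_two h2 d
    exact ⟨a, 0, by ring⟩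
  have h3 : (3 : F) ≠ 0 := fun h =>
    hchar (CharP.ringChar_of_prime_eq_zero Nat.prime_three (by exact_mod_cast h))
  -- `a ^ 2 - a * b + b ^ 2 = u ^ 2 + 3 * w ^ 2` for `a = u + w`, `b = 2 * w`
  obtain ⟨u, w, huw⟩ := FiniteField.exists_root_sum_quadratic
    (g := C 3 * X ^ 2) (degree_X_pow_sub_C two_pos d) (degree_C_mul_X_pow 2 h3)
    (FiniteField.odd_card_of_char_ne_two h2)
  simp only [eval_sub, eval_pow, eval_X, eval_C, eval_mul] at huw
  exact ⟨u + w, 2 * w, by linear_combination huw⟩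

namespace Matrix

section CommRing

variable {R : Type*} [CommRing R]

theorem sq_eq_trace_smul_sub_det_smul (M : Matrix (Fin 2) (Fin 2) R) :
    M ^ 2 = M.trace • M - M.det • 1 := by
  rw [M.eta_fin_two]
  ext i j
  fin_cases i <;> fin_cases j <;>
    simp [pow_two, trace_fin_two, det_fin_two] <;> ring

theorem mul_cyclic_eq_mul_companion (M : Matrix (Fin 2) (Fin 2) R) (x y : R) :
    M * !![x, M 0 0 * x + M 0 1 * y; y, M 1 0 * x + M 1 1 * y] =
      !![x, M 0 0 * x + M 0 1 * y; y, M 1 0 * x + M 1 1 * y] * !![0, -M.det; 1, M.trace] := by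
  rw [M.eta_fin_two]
  ext i j
  fin_cases i <;> fin_cases j <;>
    simp [trace_fin_two, det_fin_two, mul_apply, Fin.sum_univ_two] <;> ring

theorem exists_det_ne_zero_mul_eq_mul_companion {M : Matrix (Fin 2) (Fin 2) R}
    (hM : ∀ r, M ≠ scalar (Fin 2) r) :
    ∃ P : Matrix (Fin 2) (Fin 2) R, P.det ≠ 0 ∧ M * P = P * !![0, -M.det; 1, M.trace] := by
  have hcyclic : ∃ x y : R, M 1 0 * x ^ 2 + (M 1 1 - M 0 0) * x * y - M 0 1 * y ^ 2 ≠ 0 := by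
    by_contra! h
    have hc : M 1 0 = 0 := by simpa using h 1 0
    have hb : M 0 1 = 0 := by simpa using h 0 1
    have hd : M 1 1 = M 0 0 := by linear_combination h 1 1 - hc + hb
    apply hM (M 0 0)
    rw [M.eta_fin_two, hb, hc, hd]
    ext i j
    fin_cases i <;> fin_cases j <;> simp
  obtain ⟨x, y, hxy⟩ := hcyclic
  refine ⟨_, ?_, M.mul_cyclic_eq_mul_companion x y⟩
  rw [det_fin_two_of]
  contrapose! hxy
  linear_combination hxy

end CommRing

variable {K : Type*} [Field K]

theorem trace_eq_neg_one_of_pow_three_eq_one {M : Matrix (Fin 2) (Fin 2) K} (hdet : M.det = 1)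
    (h3 : M ^ 3 = 1) (hM : ∀ r, M ≠ scalar (Fin 2) r) : M.trace = -1 := by
  set t := M.trace
  have hcube : (t ^ 2 - 1) • M = (t + 1) • (1 : Matrix (Fin 2) (Fin 2) K) := by
    have : M ^ 3 = (t ^ 2 - 1) • M - t • 1 := by
      rw [pow_succ, sq_eq_trace_smul_sub_det_smul, hdet, one_smul, sub_mul, one_mul,
        smul_mul_assoc, ← sq, sq_eq_trace_smul_sub_det_smul, hdet, one_smul]
      module
    calc (t ^ 2 - 1) • M = M ^ 3 + t • 1 := by rw [this]; abel
      _ = (t + 1) • 1 := by rw [h3]; module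
  by_cases ht : t ^ 2 - 1 = 0
  · have h00 := congr_fun (congr_fun hcube 0) 0
    simp only [ht, smul_apply, one_apply_eq, smul_eq_mul, mul_one] at h00
    linear_combination -h00
  · refine absurd ?_ (hM ((t ^ 2 - 1)⁻¹ * (t + 1)))
    rw [scalar_apply, ← smul_one_eq_diagonal, mul_smul, ← hcube, inv_smul_smul₀ ht]

theorem exists_det_eq_one_mul_eq_mul_companion_cyclotomic_three [Fintype K]
    (hchar : ringChar K ≠ 3) {M : Matrix (Fin 2) (Fin 2) K} (hdet : M.det = 1)
    (htr : M.trace = -1) (hM : ∀ r, M ≠ scalar (Fin 2) r) :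
    ∃ g : Matrix (Fin 2) (Fin 2) K, g.det = 1 ∧ M * g = g * !![0, -1; 1, -1] := by
  obtain ⟨P, hP, hMP⟩ := exists_det_ne_zero_mul_eq_mul_companion hM
  rw [hdet, htr] at hMP
  obtain ⟨α, β, hαβ⟩ := FiniteField.exists_sq_sub_mul_add_sq_eq hchar P.det⁻¹
  have hcomm : !![0, -1; 1, -1] * !![α, -β; β, α - β] =
      !![α, -β; β, α - β] * !![0, -1; 1, -1] := by
    ext i j
    fin_cases i <;> fin_cases j <;> simp [mul_apply, Fin.sum_univ_two] <;> ring
  refine ⟨P * !![α, -β; β, α - β], ?_, ?_⟩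
  · rw [det_mul, det_fin_two_of,
      show α * (α - β) - -β * β = P.det⁻¹ by linear_combination hαβ, mul_inv_cancel₀ hP]
  · rw [← mul_assoc, hMP, mul_assoc, hcomm, mul_assoc]

namespace SpecialLinearGroup

variable (K) in
def companionCyclotomicThree : SL(2, K) :=
  ⟨!![0, -1; 1, -1], by simp [det_fin_two_of]⟩

theorem coe_ne_scalar_of_notMem_center {A : SL(2, K)} (hA : A ∉ Subgroup.center SL(2, K))
    (r : K) : (A : Matrix (Fin 2) (Fin 2) K) ≠ scalar (Fin 2) r := by
  intro h
  refine hA (mem_center_iff.mpr ⟨r, ?_, h.symm⟩)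
  rw [← A.det_coe, h, scalar_apply, det_diagonal, Finset.prod_const, Finset.card_univ]

theorem isConj_companionCyclotomicThree [Fintype K] (hchar : ringChar K ≠ 3) {A : SL(2, K)}
    (h3 : A ^ 3 = 1) (hA : A ∉ Subgroup.center SL(2, K)) :
    IsConj (companionCyclotomicThree K) A := by
  have hM := coe_ne_scalar_of_notMem_center hA
  have hM3 : (A : Matrix (Fin 2) (Fin 2) K) ^ 3 = 1 := by rw [← coe_pow, h3, coe_one]
  obtain ⟨g, hg, hAg⟩ := exists_det_eq_one_mul_eq_mul_companion_cyclotomic_three hchar A.det_coe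
    (trace_eq_neg_one_of_pow_three_eq_one A.det_coe hM3 hM) hM
  exact ⟨toUnits (⟨g, hg⟩ : SL(2, K)), Subtype.ext hAg.symm⟩

theorem exists_mk_eq_pow_three_eq_one {x : PSL(2, K)} (hx : x ^ 3 = 1) :
    ∃ A : SL(2, K), (A : PSL(2, K)) = x ∧ A ^ 3 = 1 := by
  obtain ⟨A, rfl⟩ := QuotientGroup.mk_surjective x
  have hcen : A ^ 3 ∈ Subgroup.center SL(2, K) := (QuotientGroup.eq_one_iff _).mp hx
  obtain ⟨r, hr, hrA⟩ := mem_center_iff.mp hcen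
  rw [Fintype.card_fin, sq_eq_one_iff] at hr
  rcases hr with rfl | rfl
  · exact ⟨A, rfl, Subtype.ext (by rw [← hrA]; simp)⟩
  · have hneg : (-1 : SL(2, K)) ∈ Subgroup.center SL(2, K) :=
      Subgroup.mem_center_iff.mpr fun g => by rw [neg_one_mul, mul_neg_one]
    refine ⟨-A, ?_, ?_⟩
    · rw [← neg_one_mul, QuotientGroup.mk_mul, (QuotientGroup.eq_one_iff _).mpr hneg, one_mul]
    · rw [Odd.neg_pow (by decide)]
      exact Subtype.ext (by rw [coe_neg, ← hrA]; simp)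

theorem isConj_mk_companionCyclotomicThree [Fintype K] (hchar : ringChar K ≠ 3)
    {x : PSL(2, K)} (hx : orderOf x = 3) :
    IsConj (companionCyclotomicThree K : PSL(2, K)) x := by
  obtain ⟨A, rfl, hA3⟩ := exists_mk_eq_pow_three_eq_one (hx ▸ pow_orderOf_eq_one x)
  have hA : A ∉ Subgroup.center SL(2, K) := fun h => by
    rw [(QuotientGroup.eq_one_iff A).mpr h, orderOf_one] at hx
    exact absurd hx (by decide)
  exact (QuotientGroup.mk' _).map_isConj (isConj_companionCyclotomicThree hchar hA3 hA)

end SpecialLinearGroup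

end Matrix

theorem stmt16 {F : Type*} [Field F] [Fintype F] (hchar : ringChar F ≠ 3)
    (x y : Matrix.ProjectiveSpecialLinearGroup (Fin 2) F)
    (hx : orderOf x = 3) (hy : orderOf y = 3) :
    IsConj x y :=
  (Matrix.SpecialLinearGroup.isConj_mk_companionCyclotomicThree hchar hx).symm.trans
    (Matrix.SpecialLinearGroup.isConj_mk_companionCyclotomicThree hchar hy)
end
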